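/- arXiv:2012.12550 — 8 statements merged into one kernel-verified Lean document; each statement's English description precedes it below -/
import Mathlib

section
/- (Lemma 1, homogeneous variance.) (i) For every cutoff c ∈ ℝ, the posterior tail probability y ↦ v_c(y) is monotone nondecreasing on ℝ. (ii) The selection regions are nested: if α₁ > α₂ are in (0,1), c₁ ≤ c₂ are cutoffs, and λ₁, λ₂ ∈ (0,1) satisfy ℙ(v_{c₁}(Y) ≥ λ₁) = α₁ and ℙ(v_{c₂}(Y) ≥ λ₂) = α₂, then {y ∈ ℝ : v_{c₂}(y) ≥ λ₂} ⊆ {y ∈ ℝ : v_{c₁}(y) ≥ λ₁}. -/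
open MeasureTheory ProbabilityTheory Filter Set

noncomputable def stdGauss (x : ℝ) : ℝ := (Real.sqrt (2 * Real.pi))⁻¹ * Real.exp (-(x ^ 2) / 2)

lemma stdGauss_pos (x : ℝ) : 0 < stdGauss x := by
  unfold stdGauss
  positivity

lemma stdGauss_le (x : ℝ) : stdGauss x ≤ (Real.sqrt (2 * Real.pi))⁻¹ := by
  unfold stdGauss
  have h1 : Real.exp (-(x ^ 2) / 2) ≤ 1 := Real.exp_le_one_iff.mpr (by nlinarith [sq_nonneg x])
  have hC : (0:ℝ) < (Real.sqrt (2 * Real.pi))⁻¹ := by positivity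
  nlinarith

lemma stdGauss_meas : Measurable stdGauss := by
  unfold stdGauss; fun_prop

lemma cross (σ : ℝ) (hσ : 0 < σ) {y₁ y₂ t t' : ℝ} (hy : y₁ ≤ y₂) (ht : t' ≤ t) :
    stdGauss ((y₁ - t) / σ) * stdGauss ((y₂ - t') / σ) ≤
      stdGauss ((y₂ - t) / σ) * stdGauss ((y₁ - t') / σ) := by
  unfold stdGauss
  have hC : (0:ℝ) < (Real.sqrt (2 * Real.pi))⁻¹ := by positivity
  have hexp : Real.exp (-(((y₁ - t) / σ) ^ 2) / 2) * Real.exp (-(((y₂ - t') / σ) ^ 2) / 2) ≤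
      Real.exp (-(((y₂ - t) / σ) ^ 2) / 2) * Real.exp (-(((y₁ - t') / σ) ^ 2) / 2) := by
    rw [← Real.exp_add, ← Real.exp_add, Real.exp_le_exp]
    have h2 : (y₂ - t) ^ 2 + (y₁ - t') ^ 2 ≤ (y₁ - t) ^ 2 + (y₂ - t') ^ 2 := by
      nlinarith [mul_nonneg (sub_nonneg.2 hy) (sub_nonneg.2 ht)]
    have hσ2 : (0:ℝ) < σ ^ 2 := by positivity
    simp only [div_pow]
    have h3 : ((y₂ - t) ^ 2 + (y₁ - t') ^ 2) / σ ^ 2 ≤ ((y₁ - t) ^ 2 + (y₂ - t') ^ 2) / σ ^ 2 := by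
      gcongr
    rw [add_div, add_div] at h3
    linarith
  calc (Real.sqrt (2 * Real.pi))⁻¹ * Real.exp (-(((y₁ - t) / σ) ^ 2) / 2) *
        ((Real.sqrt (2 * Real.pi))⁻¹ * Real.exp (-(((y₂ - t') / σ) ^ 2) / 2))
      = (Real.sqrt (2 * Real.pi))⁻¹ * (Real.sqrt (2 * Real.pi))⁻¹ *
        (Real.exp (-(((y₁ - t) / σ) ^ 2) / 2) * Real.exp (-(((y₂ - t') / σ) ^ 2) / 2)) := by ring
    _ ≤ (Real.sqrt (2 * Real.pi))⁻¹ * (Real.sqrt (2 * Real.pi))⁻¹ *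
        (Real.exp (-(((y₂ - t) / σ) ^ 2) / 2) * Real.exp (-(((y₁ - t') / σ) ^ 2) / 2)) := by
        apply mul_le_mul_of_nonneg_left hexp (by positivity)
    _ = (Real.sqrt (2 * Real.pi))⁻¹ * Real.exp (-(((y₂ - t) / σ) ^ 2) / 2) *
        ((Real.sqrt (2 * Real.pi))⁻¹ * Real.exp (-(((y₁ - t') / σ) ^ 2) / 2)) := by ring

/-- Lemma 1 (homogeneous variance): (i) the posterior tail probability `v c` is monotone
nondecreasing for every cutoff `c`; (ii) the selection regions are nested. -/
theorem posterior_tail_probability_monotone_and_nested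
    (G : Measure ℝ) [IsProbabilityMeasure G] (σ : ℝ) (hσ : 0 < σ)
    (f : ℝ → ℝ)
    (hf : ∀ y, f y = ∫ θ, stdGauss ((y - θ) / σ) ∂G)
    (hfpos : ∀ y, 0 < f y)
    (v : ℝ → ℝ → ℝ)
    (hv : ∀ c y, v c y = (∫ θ in Ici c, stdGauss ((y - θ) / σ) ∂G) / f y)
    {Ω : Type*} [MeasureSpace Ω] [IsProbabilityMeasure (ℙ : Measure Ω)]
    (θ Z Y : Ω → ℝ) (hθm : Measurable θ) (hZm : Measurable Z)
    (hθ : Measure.map θ ℙ = G)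
    (hZ : Measure.map Z ℙ = gaussianReal 0 1)
    (hindep : IndepFun θ Z ℙ)
    (hY : ∀ ω, Y ω = θ ω + σ * Z ω) :
    (∀ c : ℝ, Monotone (v c)) ∧
    (∀ α₁ α₂ : ℝ, α₁ ∈ Ioo (0:ℝ) 1 → α₂ ∈ Ioo (0:ℝ) 1 → α₂ < α₁ →
      ∀ c₁ c₂ : ℝ, c₁ ≤ c₂ →
      ∀ l₁ l₂ : ℝ, l₁ ∈ Ioo (0:ℝ) 1 → l₂ ∈ Ioo (0:ℝ) 1 →
      ℙ {ω | l₁ ≤ v c₁ (Y ω)} = ENNReal.ofReal α₁ →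
      ℙ {ω | l₂ ≤ v c₂ (Y ω)} = ENNReal.ofReal α₂ →
      {y : ℝ | l₂ ≤ v c₂ y} ⊆ {y : ℝ | l₁ ≤ v c₁ y}) := by
  -- integrability of the kernel in θ
  have hint : ∀ y : ℝ, Integrable (fun t : ℝ => stdGauss ((y - t) / σ)) G := by
    intro y
    refine Integrable.mono' (integrable_const ((Real.sqrt (2 * Real.pi))⁻¹)) ?_ ?_
    · exact (stdGauss_meas.comp (by fun_prop)).aestronglyMeasurable
    · filter_upwards with t
      rw [Real.norm_eq_abs, abs_of_nonneg (stdGauss_pos _).le]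
      exact stdGauss_le _
  -- Part (i): monotonicity
  have hmono : ∀ c : ℝ, Monotone (v c) := by
    intro c y₁ y₂ hy
    rw [hv, hv, div_le_div_iff₀ (hfpos y₁) (hfpos y₂), hf y₁, hf y₂]
    have hsplit : ∀ y : ℝ, (∫ t, stdGauss ((y - t) / σ) ∂G) =
        (∫ t in Ici c, stdGauss ((y - t) / σ) ∂G) + ∫ t in Iio c, stdGauss ((y - t) / σ) ∂G := by
      intro y
      rw [← compl_Ici (a := c)]
      exact (integral_add_compl measurableSet_Ici (hint y)).symm
    rw [hsplit y₁, hsplit y₂]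
    have hBnn : ∀ y : ℝ, 0 ≤ ∫ t in Iio c, stdGauss ((y - t) / σ) ∂G := by
      intro y
      exact integral_nonneg fun t => (stdGauss_pos _).le
    set A₁ := ∫ t in Ici c, stdGauss ((y₁ - t) / σ) ∂G with hA₁
    set A₂ := ∫ t in Ici c, stdGauss ((y₂ - t) / σ) ∂G with hA₂
    set B₁ := ∫ t in Iio c, stdGauss ((y₁ - t) / σ) ∂G with hB₁
    set B₂ := ∫ t in Iio c, stdGauss ((y₂ - t) / σ) ∂G with hB₂
    have key : A₁ * B₂ ≤ A₂ * B₁ := by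
      rw [hA₁, hA₂, ← integral_mul_const, ← integral_mul_const]
      apply setIntegral_mono_on
      · exact ((hint y₁).mul_const B₂).integrableOn
      · exact ((hint y₂).mul_const B₁).integrableOn
      · exact measurableSet_Ici
      · intro t htmem
        rw [hB₁, hB₂, ← integral_const_mul, ← integral_const_mul]
        apply setIntegral_mono_on
        · exact ((hint y₂).const_mul _).integrableOn
        · exact ((hint y₁).const_mul _).integrableOn
        · exact measurableSet_Iio
        · intro t' ht'mem
          exact cross σ hσ hy (le_trans (le_of_lt ht'mem) htmem)
    nlinarith
  refine ⟨hmono, ?_⟩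
  intro α₁ α₂ hα₁ hα₂ hlt c₁ c₂ hc l₁ l₂ hl₁ hl₂ hP₁ hP₂
  -- pointwise comparison v c₂ ≤ v c₁
  have hvle : ∀ y : ℝ, v c₂ y ≤ v c₁ y := by
    intro y
    rw [hv, hv]
    refine div_le_div_of_nonneg_right ?_ (hfpos y).le
    · exact setIntegral_mono_set (hint y).integrableOn
        (Eventually.of_forall fun t => (stdGauss_pos _).le)
        ((Ici_subset_Ici.mpr hc).eventuallyLE)
  -- nestedness by contradiction
  intro y hy2
  by_contra hcon
  simp only [mem_setOf_eq] at hy2 hcon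
  push_neg at hcon
  have hsub : {ω : Ω | l₁ ≤ v c₁ (Y ω)} ⊆ {ω : Ω | l₂ ≤ v c₂ (Y ω)} := by
    intro ω hω
    simp only [mem_setOf_eq] at hω ⊢
    have hyz : y ≤ Y ω := by
      by_contra hzy
      push_neg at hzy
      exact absurd (le_trans hω (hmono c₁ hzy.le)) (not_le.mpr hcon)
    exact le_trans hy2 (hmono c₂ hyz)
  have : (ℙ : Measure Ω) {ω | l₁ ≤ v c₁ (Y ω)} ≤ ℙ {ω | l₂ ≤ v c₂ (Y ω)} := measure_mono hsub
  rw [hP₁, hP₂] at this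
  have hle : α₁ ≤ α₂ := (ENNReal.ofReal_le_ofReal_iff hα₂.1.le).mp this
  linarith
end

section
/- (Lemma 2.) In the Gaussian location model with homogeneous variance, the posterior mean m(y) = (∫ θ φ((y−θ)/σ) dG(θ))/f(y) is monotone nondecreasing in y, and for every cutoff c ≥ 0 the posterior tail expectation e_c(y) = (∫ θ 1{θ ≥ c} φ((y−θ)/σ) dG(θ))/f(y) is monotone nondecreasing in y. Together with the monotonicity of the posterior tail probability v_c, all three criteria are nondecreasing functions of y and therefore induce the same ranking: every upper-level set of one of them is an upper-level set (a right half-line) of the observation y itself. -/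
open MeasureTheory ProbabilityTheory Filter Set

lemma abs_mul_stdGauss_le (x : ℝ) : |x| * stdGauss x ≤ (Real.sqrt (2 * Real.pi))⁻¹ := by
  unfold stdGauss
  have h1 : |x| ≤ Real.exp (x ^ 2 / 2) := by
    have := Real.add_one_le_exp (x ^ 2 / 2)
    nlinarith [sq_nonneg (|x| - 1), sq_abs x]
  have h2 : |x| * Real.exp (-(x ^ 2) / 2) ≤ 1 := by
    calc |x| * Real.exp (-(x ^ 2) / 2)
        ≤ Real.exp (x ^ 2 / 2) * Real.exp (-(x ^ 2) / 2) :=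
          mul_le_mul_of_nonneg_right h1 (le_of_lt (Real.exp_pos _))
      _ = Real.exp (x ^ 2 / 2 + -(x ^ 2) / 2) := (Real.exp_add _ _).symm
      _ = 1 := by rw [show x ^ 2 / 2 + -(x ^ 2) / 2 = 0 by ring, Real.exp_zero]
  have hC : (0:ℝ) ≤ (Real.sqrt (2 * Real.pi))⁻¹ := by positivity
  calc |x| * ((Real.sqrt (2 * Real.pi))⁻¹ * Real.exp (-(x ^ 2) / 2))
      = (Real.sqrt (2 * Real.pi))⁻¹ * (|x| * Real.exp (-(x ^ 2) / 2)) := by ring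
    _ ≤ (Real.sqrt (2 * Real.pi))⁻¹ * 1 := mul_le_mul_of_nonneg_left h2 hC
    _ = _ := mul_one _

lemma continuous_stdGauss : Continuous stdGauss := by
  unfold stdGauss
  continuity

lemma gauss_rank {σ : ℝ} (hσ : 0 < σ) {y1 y2 θ τ : ℝ} (hy : y1 ≤ y2) (hθ : τ ≤ θ) :
    stdGauss ((y2 - τ) / σ) * stdGauss ((y1 - θ) / σ) ≤
      stdGauss ((y2 - θ) / σ) * stdGauss ((y1 - τ) / σ) := by
  have hi : (0:ℝ) ≤ (σ ^ 2)⁻¹ := by positivity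
  have key : (y2 - θ) ^ 2 + (y1 - τ) ^ 2 ≤ (y2 - τ) ^ 2 + (y1 - θ) ^ 2 := by
    nlinarith [mul_nonneg (sub_nonneg.2 hθ) (sub_nonneg.2 hy)]
  have hexp : Real.exp (-(((y2 - τ) / σ) ^ 2) / 2) * Real.exp (-(((y1 - θ) / σ) ^ 2) / 2) ≤
      Real.exp (-(((y2 - θ) / σ) ^ 2) / 2) * Real.exp (-(((y1 - τ) / σ) ^ 2) / 2) := by
    rw [← Real.exp_add, ← Real.exp_add, Real.exp_le_exp]
    have hs : ((y2 - τ) / σ) ^ 2 + ((y1 - θ) / σ) ^ 2 =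
        ((y2 - τ) ^ 2 + (y1 - θ) ^ 2) * (σ ^ 2)⁻¹ := by
      field_simp
    have hs' : ((y2 - θ) / σ) ^ 2 + ((y1 - τ) / σ) ^ 2 =
        ((y2 - θ) ^ 2 + (y1 - τ) ^ 2) * (σ ^ 2)⁻¹ := by
      field_simp
    have := mul_le_mul_of_nonneg_right key hi
    nlinarith [this, hs, hs']
  unfold stdGauss
  have hC : (0:ℝ) ≤ (Real.sqrt (2 * Real.pi))⁻¹ := by positivity
  calc (Real.sqrt (2 * Real.pi))⁻¹ * Real.exp (-(((y2 - τ) / σ) ^ 2) / 2) *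
        ((Real.sqrt (2 * Real.pi))⁻¹ * Real.exp (-(((y1 - θ) / σ) ^ 2) / 2))
      = (Real.sqrt (2 * Real.pi))⁻¹ * (Real.sqrt (2 * Real.pi))⁻¹ *
        (Real.exp (-(((y2 - τ) / σ) ^ 2) / 2) * Real.exp (-(((y1 - θ) / σ) ^ 2) / 2)) := by ring
    _ ≤ (Real.sqrt (2 * Real.pi))⁻¹ * (Real.sqrt (2 * Real.pi))⁻¹ *
        (Real.exp (-(((y2 - θ) / σ) ^ 2) / 2) * Real.exp (-(((y1 - τ) / σ) ^ 2) / 2)) := by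
        exact mul_le_mul_of_nonneg_left hexp (by positivity)
    _ = _ := by ring

/-- The key likelihood-ratio comparison lemma. -/
lemma lr_key (G : Measure ℝ) [IsProbabilityMeasure G] (g w1 w2 : ℝ → ℝ)
    (hg : Monotone g)
    (hrank : ∀ τ θ : ℝ, τ ≤ θ → w2 τ * w1 θ ≤ w2 θ * w1 τ)
    (h1 : Integrable w1 G) (h2 : Integrable w2 G)
    (hg1 : Integrable (fun θ => g θ * w1 θ) G)
    (hg2 : Integrable (fun θ => g θ * w2 θ) G) :
    (∫ θ, g θ * w1 θ ∂G) * (∫ θ, w2 θ ∂G) ≤ (∫ θ, g θ * w2 θ ∂G) * (∫ θ, w1 θ ∂G) := by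
  set μ := G.prod G
  have hA : Integrable (fun p : ℝ × ℝ => (g p.1 * w2 p.1) * w1 p.2) μ := hg2.mul_prod h1
  have hB : Integrable (fun p : ℝ × ℝ => (g p.1 * w1 p.1) * w2 p.2) μ := hg1.mul_prod h2
  have hC : Integrable (fun p : ℝ × ℝ => w2 p.1 * (g p.2 * w1 p.2)) μ := h2.mul_prod hg1
  have hD : Integrable (fun p : ℝ × ℝ => w1 p.1 * (g p.2 * w2 p.2)) μ := h1.mul_prod hg2
  have hpos : 0 ≤ ∫ p : ℝ × ℝ,
      (g p.1 - g p.2) * (w2 p.1 * w1 p.2 - w2 p.2 * w1 p.1) ∂μ := by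
    apply integral_nonneg
    intro p
    show 0 ≤ (g p.1 - g p.2) * (w2 p.1 * w1 p.2 - w2 p.2 * w1 p.1)
    rcases le_total p.1 p.2 with h | h
    · have h1' := hg h
      have h2' := hrank p.1 p.2 h
      nlinarith
    · have h1' := hg h
      have h2' := hrank p.2 p.1 h
      nlinarith
  have hfun : (fun p : ℝ × ℝ => (g p.1 - g p.2) * (w2 p.1 * w1 p.2 - w2 p.2 * w1 p.1)) =
      fun p : ℝ × ℝ => ((g p.1 * w2 p.1) * w1 p.2 - (g p.1 * w1 p.1) * w2 p.2) -
        (w2 p.1 * (g p.2 * w1 p.2) - w1 p.1 * (g p.2 * w2 p.2)) := by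
    funext p; ring
  rw [hfun] at hpos
  have hAB : Integrable (fun p : ℝ × ℝ =>
      (g p.1 * w2 p.1) * w1 p.2 - (g p.1 * w1 p.1) * w2 p.2) μ := hA.sub hB
  have hCD : Integrable (fun p : ℝ × ℝ =>
      w2 p.1 * (g p.2 * w1 p.2) - w1 p.1 * (g p.2 * w2 p.2)) μ := hC.sub hD
  rw [integral_sub hAB hCD, integral_sub hA hB, integral_sub hC hD] at hpos
  have eA : ∫ p : ℝ × ℝ, (g p.1 * w2 p.1) * w1 p.2 ∂μ =
      (∫ θ, g θ * w2 θ ∂G) * (∫ θ, w1 θ ∂G) := integral_prod_mul (fun θ => g θ * w2 θ) w1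
  have eB : ∫ p : ℝ × ℝ, (g p.1 * w1 p.1) * w2 p.2 ∂μ =
      (∫ θ, g θ * w1 θ ∂G) * (∫ θ, w2 θ ∂G) := integral_prod_mul (fun θ => g θ * w1 θ) w2
  have eC : ∫ p : ℝ × ℝ, w2 p.1 * (g p.2 * w1 p.2) ∂μ =
      (∫ θ, w2 θ ∂G) * (∫ θ, g θ * w1 θ ∂G) := integral_prod_mul w2 (fun θ => g θ * w1 θ)
  have eD : ∫ p : ℝ × ℝ, w1 p.1 * (g p.2 * w2 p.2) ∂μ =
      (∫ θ, w1 θ ∂G) * (∫ θ, g θ * w2 θ ∂G) := integral_prod_mul w1 (fun θ => g θ * w2 θ)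
  rw [eA, eB, eC, eD] at hpos
  linarith

/-- Lemma 2: in the Gaussian location model with homogeneous variance, the posterior mean,
the posterior tail expectation (for nonnegative cutoffs) and the posterior tail probability
are all monotone nondecreasing in the observation, so all three induce the same ranking:
every upper-level set of each criterion is an upper set of observations. -/
theorem posterior_criteria_same_ranking
    (G : Measure ℝ) [IsProbabilityMeasure G] (σ : ℝ) (hσ : 0 < σ)
    (f : ℝ → ℝ)
    (hf : ∀ y, f y = ∫ θ, stdGauss ((y - θ) / σ) ∂G)
    (hfpos : ∀ y, 0 < f y)
    (m : ℝ → ℝ)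
    (hm : ∀ y, m y = (∫ θ, θ * stdGauss ((y - θ) / σ) ∂G) / f y)
    (e : ℝ → ℝ → ℝ)
    (he : ∀ c y, e c y = (∫ θ in Ici c, θ * stdGauss ((y - θ) / σ) ∂G) / f y)
    (v : ℝ → ℝ → ℝ)
    (hv : ∀ c y, v c y = (∫ θ in Ici c, stdGauss ((y - θ) / σ) ∂G) / f y) :
    Monotone m ∧
    (∀ c : ℝ, 0 ≤ c → Monotone (e c)) ∧
    (∀ c : ℝ, Monotone (v c)) ∧
    (∀ lam : ℝ, IsUpperSet {y : ℝ | lam ≤ m y}) ∧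
    (∀ c : ℝ, 0 ≤ c → ∀ lam : ℝ, IsUpperSet {y : ℝ | lam ≤ e c y}) ∧
    (∀ c lam : ℝ, IsUpperSet {y : ℝ | lam ≤ v c y}) := by
  have hσ' : σ ≠ 0 := ne_of_gt hσ
  set C : ℝ := (Real.sqrt (2 * Real.pi))⁻¹ with hCdef
  have hC : (0:ℝ) ≤ C := by positivity
  -- weight functions
  set w : ℝ → ℝ → ℝ := fun y θ => stdGauss ((y - θ) / σ) with hw
  have hwcont : ∀ y, Continuous (w y) :=
    fun y => continuous_stdGauss.comp (by continuity)
  have hwmeas : ∀ y, AEStronglyMeasurable (w y) G :=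
    fun y => (hwcont y).aestronglyMeasurable
  have hwbound : ∀ y θ, ‖w y θ‖ ≤ C := by
    intro y θ
    rw [Real.norm_eq_abs, abs_of_pos (stdGauss_pos _)]
    exact stdGauss_le _
  -- integrability of w y
  have hInt_w : ∀ y, Integrable (w y) G := by
    intro y
    exact (integrable_const C).mono' (hwmeas y) (Filter.Eventually.of_forall (hwbound y))
  -- bound for θ * w y θ
  have hmulbound : ∀ y θ, ‖θ * w y θ‖ ≤ |y| * C + σ * C := by
    intro y θ
    have hx : θ = y - σ * ((y - θ) / σ) := by field_simp; ring
    set x := (y - θ) / σ with hxdef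
    have hθabs : |θ| ≤ |y| + σ * |x| := by
      rw [hx]
      calc |y - σ * x| ≤ |y| + |σ * x| := abs_sub _ _
        _ = |y| + σ * |x| := by rw [abs_mul, abs_of_pos hσ]
    have h0 : (0:ℝ) ≤ stdGauss x := le_of_lt (stdGauss_pos x)
    rw [Real.norm_eq_abs, abs_mul]
    calc |θ| * |stdGauss x| = |θ| * stdGauss x := by rw [abs_of_nonneg h0]
      _ ≤ (|y| + σ * |x|) * stdGauss x := mul_le_mul_of_nonneg_right hθabs h0
      _ = |y| * stdGauss x + σ * (|x| * stdGauss x) := by ring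
      _ ≤ |y| * C + σ * C := by
          have := stdGauss_le x
          have := abs_mul_stdGauss_le x
          have hy0 : (0:ℝ) ≤ |y| := abs_nonneg _
          nlinarith
  have hmulmeas : ∀ y, AEStronglyMeasurable (fun θ => θ * w y θ) G :=
    fun y => (continuous_id.mul (hwcont y)).aestronglyMeasurable
  have hInt_mw : ∀ y, Integrable (fun θ => θ * w y θ) G := by
    intro y
    exact (integrable_const (|y| * C + σ * C)).mono' (hmulmeas y)
      (Filter.Eventually.of_forall (hmulbound y))
  -- ranking property
  have hrank : ∀ y1 y2, y1 ≤ y2 → ∀ τ θ : ℝ, τ ≤ θ →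
      w y2 τ * w y1 θ ≤ w y2 θ * w y1 τ := by
    intro y1 y2 hy τ θ hτθ
    exact gauss_rank hσ hy hτθ
  -- generic consequence: for monotone integrable g, ratios are ranked
  have main : ∀ (g : ℝ → ℝ), Monotone g →
      (∀ y, Integrable (fun θ => g θ * w y θ) G) →
      ∀ y1 y2, y1 ≤ y2 →
      (∫ θ, g θ * w y1 θ ∂G) / f y1 ≤ (∫ θ, g θ * w y2 θ ∂G) / f y2 := by
    intro g hg hginteg y1 y2 hy
    rw [div_le_div_iff₀ (hfpos y1) (hfpos y2), hf y1, hf y2]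
    exact lr_key G g (w y1) (w y2) hg (hrank y1 y2 hy) (hInt_w y1) (hInt_w y2)
      (hginteg y1) (hginteg y2)
  -- monotone of m
  have hmono_m : Monotone m := by
    intro y1 y2 hy
    rw [hm y1, hm y2]
    exact main (fun θ => θ) (fun a b h => h) hInt_mw y1 y2 hy
  -- indicator rewriting for set integrals
  have hset1 : ∀ c y, (∫ θ in Ici c, θ * stdGauss ((y - θ) / σ) ∂G) =
      ∫ θ, (Ici c).indicator id θ * w y θ ∂G := by
    intro c y
    rw [← integral_indicator measurableSet_Ici]
    congr 1
    funext θ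
    by_cases h : θ ∈ Ici c
    · simp [indicator_of_mem h, hw]
    · simp [indicator_of_notMem h]
  have hset2 : ∀ c y, (∫ θ in Ici c, stdGauss ((y - θ) / σ) ∂G) =
      ∫ θ, (Ici c).indicator (fun _ => (1:ℝ)) θ * w y θ ∂G := by
    intro c y
    rw [← integral_indicator measurableSet_Ici]
    congr 1
    funext θ
    by_cases h : θ ∈ Ici c
    · simp [indicator_of_mem h, hw]
    · simp [indicator_of_notMem h]
  -- integrability for the indicator versions
  have hInt_e : ∀ c y, Integrable (fun θ => (Ici c).indicator id θ * w y θ) G := by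
    intro c y
    apply (integrable_const (|y| * C + σ * C)).mono'
    · exact ((measurable_id.indicator measurableSet_Ici).aestronglyMeasurable.mul
        (hwmeas y))
    · refine Filter.Eventually.of_forall fun θ => ?_
      by_cases h : θ ∈ Ici c
      · simpa [indicator_of_mem h] using hmulbound y θ
      · simp [indicator_of_notMem h]
        positivity
  have hInt_v : ∀ c y, Integrable (fun θ => (Ici c).indicator (fun _ => (1:ℝ)) θ * w y θ) G := by
    intro c y
    apply (integrable_const C).mono'
    · exact (((measurable_const (a := (1:ℝ))).indicator
        measurableSet_Ici).aestronglyMeasurable.mul (hwmeas y))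
    · refine Filter.Eventually.of_forall fun θ => ?_
      by_cases h : θ ∈ Ici c
      · simpa [indicator_of_mem h] using hwbound y θ
      · simp [indicator_of_notMem h]
        positivity
  -- monotonicity of the indicator payoffs
  have hgmon_e : ∀ c : ℝ, 0 ≤ c → Monotone ((Ici c).indicator (id : ℝ → ℝ)) := by
    intro c hc τ θ hτθ
    by_cases hτ : τ ∈ Ici c
    · have hθ : θ ∈ Ici c := le_trans hτ hτθ
      simpa [indicator_of_mem hτ, indicator_of_mem hθ] using hτθ
    · by_cases hθ : θ ∈ Ici c
      · have : (0:ℝ) ≤ θ := le_trans hc hθ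
        simpa [indicator_of_notMem hτ, indicator_of_mem hθ] using this
      · simp [indicator_of_notMem hτ, indicator_of_notMem hθ]
  have hgmon_v : ∀ c : ℝ, Monotone ((Ici c).indicator (fun _ => (1:ℝ))) := by
    intro c τ θ hτθ
    by_cases hτ : τ ∈ Ici c
    · have hθ : θ ∈ Ici c := le_trans hτ hτθ
      simp [indicator_of_mem hτ, indicator_of_mem hθ]
    · by_cases hθ : θ ∈ Ici c
      · simp [indicator_of_notMem hτ, indicator_of_mem hθ]
      · simp [indicator_of_notMem hτ, indicator_of_notMem hθ]
  have hmono_e : ∀ c : ℝ, 0 ≤ c → Monotone (e c) := by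
    intro c hc y1 y2 hy
    rw [he c y1, he c y2, hset1 c y1, hset1 c y2]
    exact main _ (hgmon_e c hc) (hInt_e c) y1 y2 hy
  have hmono_v : ∀ c : ℝ, Monotone (v c) := by
    intro c y1 y2 hy
    rw [hv c y1, hv c y2, hset2 c y1, hset2 c y2]
    exact main _ (hgmon_v c) (hInt_v c) y1 y2 hy
  refine ⟨hmono_m, hmono_e, hmono_v, ?_, ?_, ?_⟩
  · intro lam a b hab ha
    exact le_trans ha (hmono_m hab)
  · intro c hc lam a b hab ha
    exact le_trans ha (hmono_e c hc hab)
  · intro c lam a b hab ha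
    exact le_trans ha (hmono_v c hab)
end

section
/- (Proposition 2, optimal selection with heterogeneous known variances.) Define λ₁* = inf{λ ∈ [0,1] : E[(1 − V − γ) 1{V ≥ λ}] ≤ 0} and λ₂* = inf{λ ∈ [0,1] : ℙ(V ≥ λ) ≤ α}, and set λ* = max(λ₁*, λ₂*). Then the rule selecting on {V ≥ λ*} satisfies both constraints: ℙ(V ≥ λ*) ≤ α and ℙ(θ < c, V ≥ λ*) ≤ γ ℙ(V ≥ λ*); and it is optimal among threshold rules: for every λ ∈ [0,1] with ℙ(V ≥ λ) ≤ α and ℙ(θ < c, V ≥ λ) ≤ γ ℙ(V ≥ λ), one has ℙ(θ ≥ c, V ≥ λ) ≤ ℙ(θ ≥ c, V ≥ λ*). -/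
open MeasureTheory ProbabilityTheory Filter Set

set_option linter.unusedSectionVars false
set_option linter.unusedVariables false

namespace SelP2

noncomputable def gk (y t s : ℝ) : ℝ := (1 / s) * stdGauss ((y - t) / s)

lemma continuous_stdGauss : Continuous stdGauss := by
  unfold stdGauss; fun_prop

lemma measurable_gk : Measurable (fun p : ℝ × ℝ × ℝ => gk p.1 p.2.1 p.2.2) := by
  unfold gk
  apply Measurable.mul
  · fun_prop
  · exact continuous_stdGauss.measurable.comp (by fun_prop)

lemma gk_eq_pdf {s : ℝ} (hs : 0 < s) (y t : ℝ) :
    gk y t s = gaussianPDFReal t (⟨s^2, sq_nonneg s⟩ : NNReal) y := by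
  unfold gk stdGauss gaussianPDFReal
  have h2π : (0:ℝ) < 2 * Real.pi := by positivity
  erw [NNReal.coe_mk]
  have h1 : Real.sqrt (2 * Real.pi * s^2) = Real.sqrt (2 * Real.pi) * s := by
    rw [Real.sqrt_mul (le_of_lt h2π), Real.sqrt_sq hs.le]
  rw [h1]
  have h2 : -(((y - t) / s) ^ 2) / 2 = -(y - t)^2 / (2 * s^2) := by
    rw [div_pow]; ring
  rw [h2, mul_inv]
  ring

lemma gk_pos {s : ℝ} (hs : 0 < s) (y t : ℝ) : 0 < gk y t s := by
  unfold gk stdGauss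
  have : (0:ℝ) < Real.sqrt (2 * Real.pi) := Real.sqrt_pos.mpr (by positivity)
  positivity

lemma gk_neg {s : ℝ} (hs : s < 0) (y t : ℝ) : gk y t s < 0 := by
  unfold gk stdGauss
  have h : (0:ℝ) < Real.sqrt (2 * Real.pi) := Real.sqrt_pos.mpr (by positivity)
  have h1 : (0:ℝ) < (Real.sqrt (2 * Real.pi))⁻¹ * Real.exp (-(((y-t)/s) ^ 2) / 2) := by positivity
  have h2 : 1 / s < 0 := by
    simpa using inv_neg''.mpr hs
  nlinarith

lemma gk_zero (y t : ℝ) : gk y t 0 = 0 := by simp [gk]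


/-- A bounded a.e.-strongly-measurable function is integrable w.r.t. a finite measure. -/
lemma integrable_of_bounded {X : Type*} [MeasurableSpace X] {μ : Measure X} [IsFiniteMeasure μ]
    {f : X → ℝ} (hm : AEStronglyMeasurable f μ) {C : ℝ} (hC : ∀ x, |f x| ≤ C) :
    Integrable f μ :=
  (integrable_const C).mono' hm (ae_of_all _ (by simpa [Real.norm_eq_abs] using hC))

variable (G : Measure ℝ) [IsProbabilityMeasure G] (c : ℝ)

noncomputable def nume (y s : ℝ) : ℝ := ∫ t in Ici c, gk y t s ∂G
noncomputable def dene (y s : ℝ) : ℝ := ∫ t, gk y t s ∂G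

lemma gk_abs_le (y t s : ℝ) : |gk y t s| ≤ |1/s| * (Real.sqrt (2 * Real.pi))⁻¹ := by
  unfold gk stdGauss
  have h : (0:ℝ) < Real.sqrt (2 * Real.pi) := Real.sqrt_pos.mpr (by positivity)
  rw [abs_mul, abs_mul]
  have h1 : |(Real.sqrt (2 * Real.pi))⁻¹| = (Real.sqrt (2 * Real.pi))⁻¹ := abs_of_pos (by positivity)
  have h2 : |Real.exp (-(((y - t)/s) ^ 2) / 2)| ≤ 1 := by
    rw [abs_of_pos (Real.exp_pos _)]
    rw [Real.exp_le_one_iff]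
    have : (0:ℝ) ≤ ((y - t)/s)^2 := sq_nonneg _
    linarith
  calc |1/s| * (|(Real.sqrt (2 * Real.pi))⁻¹| * |Real.exp (-(((y - t)/s) ^ 2) / 2)|)
      ≤ |1/s| * (|(Real.sqrt (2 * Real.pi))⁻¹| * 1) := by
        gcongr
    _ = |1/s| * (Real.sqrt (2 * Real.pi))⁻¹ := by rw [h1, mul_one]

lemma integrable_gk_G (y s : ℝ) : Integrable (fun t => gk y t s) G :=
  integrable_of_bounded (μ := G)
    ((measurable_gk.comp (by fun_prop : Measurable (fun t : ℝ => (y, t, s)))).aestronglyMeasurable)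
    (fun t => gk_abs_le y t s)

lemma integrableOn_gk_G (y s : ℝ) : IntegrableOn (fun t => gk y t s) (Ici c) G :=
  (integrable_gk_G G y s).integrableOn

lemma dene_pos {s : ℝ} (hs : 0 < s) (y : ℝ) : 0 < dene G y s := by
  have h := (integrable_gk_G G y s)
  refine (integral_pos_iff_support_of_nonneg (fun t => (gk_pos hs y t).le) h).mpr ?_
  have hsup : (Function.support fun t => gk y t s) = univ :=
    eq_univ_of_forall (fun t => (gk_pos hs y t).ne')
  rw [hsup]
  simp

lemma dene_neg {s : ℝ} (hs : s < 0) (y : ℝ) : dene G y s < 0 := by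
  have h0 : 0 < ∫ t, -gk y t s ∂G := by
    refine (integral_pos_iff_support_of_nonneg
      (fun t => (neg_pos.mpr (gk_neg hs y t)).le) (integrable_gk_G G y s).neg).mpr ?_
    have hsup : (Function.support fun t => -gk y t s) = univ :=
      eq_univ_of_forall (fun t => (neg_pos.mpr (gk_neg hs y t)).ne')
    rw [hsup]
    simp
  rw [integral_neg] at h0
  unfold dene; linarith

lemma nume_le_dene {s : ℝ} (hs : 0 < s) (y : ℝ) : nume G c y s ≤ dene G y s :=
  setIntegral_le_integral (integrable_gk_G G y s) (ae_of_all _ (fun t => (gk_pos hs y t).le))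

lemma nume_nonneg {s : ℝ} (hs : 0 < s) (y : ℝ) : 0 ≤ nume G c y s :=
  setIntegral_nonneg measurableSet_Ici (fun t _ => (gk_pos hs y t).le)

lemma dene_le_nume {s : ℝ} (hs : s < 0) (y : ℝ) : dene G y s ≤ nume G c y s := by
  have := setIntegral_le_integral (f := fun t => -gk y t s) (s := Ici c)
    (integrable_gk_G G y s).neg (ae_of_all _ (fun t => (neg_pos.mpr (gk_neg hs y t)).le))
  rw [integral_neg, integral_neg] at this
  unfold nume dene; linarith

lemma nume_nonpos {s : ℝ} (hs : s < 0) (y : ℝ) : nume G c y s ≤ 0 := by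
  have : 0 ≤ ∫ t in Ici c, -gk y t s ∂G :=
    setIntegral_nonneg measurableSet_Ici (fun t _ => (neg_pos.mpr (gk_neg hs y t)).le)
  rw [integral_neg] at this
  unfold nume; linarith

/-- The ratio `nume/dene` is in `[0,1]` for every `y` and `s`. -/
lemma ratio_mem_Icc (y s : ℝ) : nume G c y s / dene G y s ∈ Icc (0:ℝ) 1 := by
  rcases lt_trichotomy s 0 with hs | hs | hs
  · have hd := dene_neg G hs y
    have hn := nume_nonpos G c hs y
    have hdn := dene_le_nume G c hs y
    constructor
    · exact div_nonneg_of_nonpos hn hd.le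
    · rw [div_le_one_iff]
      exact Or.inr (Or.inr ⟨hd, hdn⟩)
  · subst hs
    have h0 : nume G c y 0 = 0 := by
      unfold nume; simp [gk_zero]
    rw [h0]
    simp
  · have hd := dene_pos G hs y
    constructor
    · exact div_nonneg (nume_nonneg G c hs y) hd.le
    · exact (div_le_one hd).mpr (nume_le_dene G c hs y)


lemma map_affine {s : ℝ} (hs : 0 < s) (t : ℝ) :
    Measure.map (fun z => t + s * z) (gaussianReal 0 1)
      = gaussianReal t (⟨s^2, sq_nonneg s⟩ : NNReal) := by
  have h1 : (fun z : ℝ => t + s * z) = (fun x : ℝ => t + x) ∘ (fun z : ℝ => s * z) := rfl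
  rw [h1, ← Measure.map_map (by fun_prop) (by fun_prop)]
  rw [show Measure.map (fun z : ℝ => s * z) (gaussianReal 0 1)
      = gaussianReal (s * 0) (⟨s^2, sq_nonneg s⟩ * 1) from gaussianReal_map_const_mul s]
  rw [show Measure.map (fun x : ℝ => t + x) (gaussianReal (s*0) (⟨s^2, sq_nonneg s⟩ * 1))
      = gaussianReal (s * 0 + t) (⟨s^2, sq_nonneg s⟩ * 1) from gaussianReal_map_const_add t]
  norm_num
  exact congrArg (gaussianReal t) (mul_one _)

lemma var_ne_zero {s : ℝ} (hs : 0 < s) : (⟨s^2, sq_nonneg s⟩ : NNReal) ≠ 0 := by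
  intro h
  have := congrArg (NNReal.toReal) h
  change s^2 = (0:ℝ) at this
  nlinarith

lemma stepA {s : ℝ} (hs : 0 < s) (t : ℝ) {g : ℝ → ℝ} (hg : Measurable g) :
    ∫ z, g (t + s * z) ∂(gaussianReal 0 1) = ∫ y, g y * gk y t s := by
  have h1 : ∫ z, g (t + s * z) ∂(gaussianReal 0 1)
      = ∫ y, g y ∂(Measure.map (fun z => t + s * z) (gaussianReal 0 1)) :=
    (integral_map (by fun_prop) hg.aestronglyMeasurable).symm
  rw [h1, map_affine hs t, gaussianReal_of_var_ne_zero t (var_ne_zero hs)]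
  have h2 : gaussianPDF t (⟨s^2, sq_nonneg s⟩ : NNReal)
      = fun y => ((Real.toNNReal (gaussianPDFReal t (⟨s^2, sq_nonneg s⟩ : NNReal) y) : NNReal) : ENNReal) := by
    funext y; rfl
  rw [h2]
  refine (integral_withDensity_eq_integral_smul
    ((measurable_gaussianPDFReal t _).real_toNNReal) g).trans ?_
  refine integral_congr_ae (ae_of_all _ (fun y => ?_))
  show (gaussianPDFReal t (⟨s^2, sq_nonneg s⟩ : NNReal) y).toNNReal • g y = g y * gk y t s
  erw [NNReal.smul_def, Real.coe_toNNReal _ (gaussianPDFReal_nonneg t _ y),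
    gk_eq_pdf hs y t, smul_eq_mul, mul_comm]

lemma integrable_gkProd {s : ℝ} (hs : 0 < s) :
    Integrable (fun p : ℝ × ℝ => gk p.2 p.1 s) (G.prod volume) := by
  have hm : Measurable (fun p : ℝ × ℝ => gk p.2 p.1 s) :=
    measurable_gk.comp ((by fun_prop : Measurable (fun p : ℝ × ℝ => (p.2, p.1, s))))
  rw [integrable_prod_iff hm.aestronglyMeasurable]
  constructor
  · refine ae_of_all _ (fun t => ?_)
    have : (fun y => gk y t s) = gaussianPDFReal t (⟨s^2, sq_nonneg s⟩ : NNReal) := by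
      funext y; exact gk_eq_pdf hs y t
    rw [this]
    exact integrable_gaussianPDFReal t _
  · have : (fun t : ℝ => ∫ y, ‖gk y t s‖) = fun _ => (1:ℝ) := by
      funext t
      have h1 : (fun y => ‖gk y t s‖) = gaussianPDFReal t (⟨s^2, sq_nonneg s⟩ : NNReal) := by
        funext y
        rw [Real.norm_eq_abs, abs_of_pos (gk_pos hs y t), gk_eq_pdf hs y t]
      rw [h1, integral_gaussianPDFReal_eq_one t (var_ne_zero hs)]
    rw [this]
    exact integrable_const 1

lemma keyswap {s : ℝ} (hs : 0 < s) {q g : ℝ → ℝ} (hq : Measurable q) (hg : Measurable g)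
    {Cq Cg : ℝ} (hqb : ∀ x, |q x| ≤ Cq) (hgb : ∀ x, |g x| ≤ Cg) :
    ∫ t, q t * ∫ z, g (t + s * z) ∂(gaussianReal 0 1) ∂G
      = ∫ y, g y * ∫ t, q t * gk y t s ∂G := by
  have hCq : 0 ≤ Cq := (abs_nonneg _).trans (hqb 0)
  have hCg : 0 ≤ Cg := (abs_nonneg _).trans (hgb 0)
  have hmm : Measurable (fun p : ℝ × ℝ => q p.1 * (g p.2 * gk p.2 p.1 s)) := by
    have := measurable_gk
    fun_prop
  have hInt : Integrable (Function.uncurry fun t y => q t * (g y * gk y t s)) (G.prod volume) := by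
    refine ((integrable_gkProd G hs).const_mul (Cq * Cg)).mono' hmm.aestronglyMeasurable
      (ae_of_all _ (fun p => ?_))
    simp only [Function.uncurry]
    rw [Real.norm_eq_abs, abs_mul, abs_mul]
    have h0 : |gk p.2 p.1 s| = gk p.2 p.1 s := abs_of_pos (gk_pos hs p.2 p.1)
    calc |q p.1| * (|g p.2| * |gk p.2 p.1 s|) ≤ Cq * (Cg * |gk p.2 p.1 s|) := by
          gcongr; exact hqb p.1; exact hgb p.2
      _ = Cq * Cg * gk p.2 p.1 s := by rw [h0]; ring
  calc ∫ t, q t * ∫ z, g (t + s * z) ∂(gaussianReal 0 1) ∂G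
      = ∫ t, q t * (∫ y, g y * gk y t s) ∂G :=
        integral_congr_ae (ae_of_all _ (fun t => by
          show q t * ∫ z, g (t + s * z) ∂(gaussianReal 0 1) = q t * ∫ y, g y * gk y t s
          rw [stepA hs t hg]))
    _ = ∫ t, ∫ y, q t * (g y * gk y t s) ∂volume ∂G :=
        integral_congr_ae (ae_of_all _ (fun t => by
          show q t * ∫ y, g y * gk y t s = ∫ y, q t * (g y * gk y t s)
          rw [integral_const_mul]))
    _ = ∫ y, ∫ t, q t * (g y * gk y t s) ∂G ∂volume := integral_integral_swap hInt
    _ = ∫ y, g y * ∫ t, q t * gk y t s ∂G :=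
        integral_congr_ae (ae_of_all _ (fun y => by
          show ∫ t, q t * (g y * gk y t s) ∂G = g y * ∫ t, q t * gk y t s ∂G
          rw [← integral_const_mul]
          exact integral_congr_ae (ae_of_all _ (fun t => by ring))))


noncomputable def vr (y s : ℝ) : ℝ := nume G c y s / dene G y s

lemma vr_mem_Icc (y s : ℝ) : vr G c y s ∈ Icc (0:ℝ) 1 := ratio_mem_Icc G c y s

lemma abs_vr_le_one (y s : ℝ) : |vr G c y s| ≤ 1 := by
  have h := vr_mem_Icc G c y s
  rw [abs_le]; exact ⟨by linarith [h.1], h.2⟩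

lemma measurable_vr : Measurable (fun p : ℝ × ℝ => vr G c p.1 p.2) := by
  have hf : StronglyMeasurable (fun r : (ℝ × ℝ) × ℝ => gk r.1.1 r.2 r.1.2) :=
    (measurable_gk.comp ((by fun_prop : Measurable (fun r : (ℝ × ℝ) × ℝ => (r.1.1, r.2, r.1.2))))).stronglyMeasurable
  have h1 : Measurable (fun p : ℝ × ℝ => nume G c p.1 p.2) :=
    (hf.integral_prod_right' (ν := G.restrict (Ici c))).measurable
  have h2 : Measurable (fun p : ℝ × ℝ => dene G p.1 p.2) :=
    (hf.integral_prod_right' (ν := G)).measurable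
  exact h1.div h2

lemma integral_indicator_gk (y s : ℝ) :
    ∫ t, (Ici c).indicator (fun _ => (1:ℝ)) t * gk y t s ∂G = nume G c y s := by
  have h : (fun t => (Ici c).indicator (fun _ => (1:ℝ)) t * gk y t s)
      = (Ici c).indicator (fun t => gk y t s) := by
    funext t
    by_cases ht : t ∈ Ici c <;> simp [indicator_apply, ht]
  rw [h, integral_indicator measurableSet_Ici]
  rfl

lemma per_s2 {s : ℝ} (hs : 0 < s) {F : ℝ → ℝ} (hF : Measurable F) (hFb : ∀ x, |F x| ≤ 1) :
    ∫ r : ℝ × ℝ, (Ici c).indicator (fun _ => (1:ℝ)) r.1 * F (vr G c (r.1 + s * r.2) s)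
        ∂(G.prod (gaussianReal 0 1))
      = ∫ r : ℝ × ℝ, vr G c (r.1 + s * r.2) s * F (vr G c (r.1 + s * r.2) s)
        ∂(G.prod (gaussianReal 0 1)) := by
  set N := gaussianReal 0 1 with hN
  have hvrs : Measurable (fun y => vr G c y s) :=
    (measurable_vr G c).comp ((by fun_prop : Measurable (fun y : ℝ => (y, s))))
  set g : ℝ → ℝ := fun y => F (vr G c y s) with hgdef
  set g' : ℝ → ℝ := fun y => vr G c y s * F (vr G c y s) with hg'def
  have hgm : Measurable g := hF.comp hvrs
  have hg'm : Measurable g' := hvrs.mul hgm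
  have hgb : ∀ x, |g x| ≤ 1 := fun x => hFb _
  have hg'b : ∀ x, |g' x| ≤ 1 := fun x => by
    rw [hg'def, abs_mul]
    exact mul_le_one₀ (abs_vr_le_one G c x s) (abs_nonneg _) (hFb _)
  set q : ℝ → ℝ := (Ici c).indicator (fun _ => (1:ℝ)) with hqdef
  have hqm : Measurable q := measurable_const.indicator measurableSet_Ici
  have hqb : ∀ x, |q x| ≤ 1 := fun x => by
    rw [hqdef]
    by_cases hx : x ∈ Ici c <;> simp [indicator_apply, hx]
  have hL1 : Measurable (fun r : ℝ × ℝ => q r.1 * g (r.1 + s * r.2)) :=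
    (hqm.comp measurable_fst).mul (hgm.comp (by fun_prop))
  have hL2 : Measurable (fun r : ℝ × ℝ => g' (r.1 + s * r.2)) :=
    hg'm.comp (by fun_prop)
  have hIL : Integrable (fun r : ℝ × ℝ => q r.1 * g (r.1 + s * r.2)) (G.prod N) :=
    integrable_of_bounded hL1.aestronglyMeasurable
      (C := 1) (fun r => by
        rw [abs_mul]
        exact mul_le_one₀ (hqb _) (abs_nonneg _) (hgb _))
  have hIR : Integrable (fun r : ℝ × ℝ => g' (r.1 + s * r.2)) (G.prod N) :=
    integrable_of_bounded hL2.aestronglyMeasurable (C := 1) (fun r => hg'b _)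
  show ∫ r : ℝ × ℝ, q r.1 * g (r.1 + s * r.2) ∂(G.prod N)
      = ∫ r : ℝ × ℝ, g' (r.1 + s * r.2) ∂(G.prod N)
  calc ∫ r : ℝ × ℝ, q r.1 * g (r.1 + s * r.2) ∂(G.prod N)
      = ∫ t, ∫ z, q t * g (t + s * z) ∂N ∂G := integral_prod _ hIL
    _ = ∫ t, q t * ∫ z, g (t + s * z) ∂N ∂G :=
        integral_congr_ae (ae_of_all _ (fun t => by
          show ∫ z, q t * g (t + s * z) ∂N = q t * ∫ z, g (t + s * z) ∂N
          rw [integral_const_mul]))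
    _ = ∫ y, g y * ∫ t, q t * gk y t s ∂G := keyswap G hs hqm hgm hqb hgb
    _ = ∫ y, g' y * ∫ t, (1:ℝ) * gk y t s ∂G :=
        integral_congr_ae (ae_of_all _ (fun y => by
          show g y * ∫ t, q t * gk y t s ∂G = g' y * ∫ t, (1:ℝ) * gk y t s ∂G
          rw [integral_indicator_gk G c y s]
          have hone : ∫ t, (1:ℝ) * gk y t s ∂G = dene G y s := by
            simp only [one_mul]; rfl
          rw [hone]
          have hvd : vr G c y s * dene G y s = nume G c y s :=
            div_mul_cancel₀ _ (dene_pos G hs y).ne'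
          rw [hgdef, hg'def]
          calc F (vr G c y s) * nume G c y s
              = F (vr G c y s) * (vr G c y s * dene G y s) := by rw [hvd]
            _ = vr G c y s * F (vr G c y s) * dene G y s := by ring))
    _ = ∫ t, (1:ℝ) * ∫ z, g' (t + s * z) ∂N ∂G :=
        (keyswap G hs measurable_const hg'm (fun _ => le_of_eq abs_one) hg'b).symm
    _ = ∫ t, ∫ z, g' (t + s * z) ∂N ∂G :=
        integral_congr_ae (ae_of_all _ (fun t => by
          show (1:ℝ) * ∫ z, g' (t + s * z) ∂N = ∫ z, g' (t + s * z) ∂N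
          rw [one_mul]))
    _ = ∫ r : ℝ × ℝ, g' (r.1 + s * r.2) ∂(G.prod N) := (integral_prod _ hIR).symm

lemma master (H : Measure ℝ) [IsProbabilityMeasure H] (hH : H (Ioi (0:ℝ)) = 1)
    {F : ℝ → ℝ} (hF : Measurable F) (hFb : ∀ x, |F x| ≤ 1) :
    ∫ p : ℝ × ℝ × ℝ, (Ici c).indicator (fun _ => (1:ℝ)) p.2.1
        * F (vr G c (p.2.1 + p.1 * p.2.2) p.1) ∂(H.prod (G.prod (gaussianReal 0 1)))
      = ∫ p : ℝ × ℝ × ℝ, vr G c (p.2.1 + p.1 * p.2.2) p.1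
        * F (vr G c (p.2.1 + p.1 * p.2.2) p.1) ∂(H.prod (G.prod (gaussianReal 0 1))) := by
  set N := gaussianReal 0 1 with hN
  have hae : ∀ᵐ s ∂H, s ∈ Ioi (0:ℝ) := by
    rw [ae_iff]
    have : {s : ℝ | ¬ s ∈ Ioi (0:ℝ)} = (Ioi (0:ℝ))ᶜ := rfl
    rw [this, measure_compl measurableSet_Ioi (measure_ne_top H _), hH]
    simp
  have hWm : Measurable (fun p : ℝ × ℝ × ℝ => vr G c (p.2.1 + p.1 * p.2.2) p.1) :=
    (measurable_vr G c).comp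
      ((by fun_prop : Measurable (fun p : ℝ × ℝ × ℝ => (p.2.1 + p.1 * p.2.2, p.1))))
  have hqm : Measurable ((Ici c).indicator (fun _ => (1:ℝ))) :=
    measurable_const.indicator measurableSet_Ici
  have hqb : ∀ x : ℝ, |(Ici c).indicator (fun _ => (1:ℝ)) x| ≤ 1 := fun x => by
    by_cases hx : x ∈ Ici c <;> simp [indicator_apply, hx]
  have hIL : Integrable (fun p : ℝ × ℝ × ℝ => (Ici c).indicator (fun _ => (1:ℝ)) p.2.1
      * F (vr G c (p.2.1 + p.1 * p.2.2) p.1)) (H.prod (G.prod N)) :=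
    integrable_of_bounded ((hqm.comp (by fun_prop)).mul ((hF.comp hWm))).aestronglyMeasurable
      (C := 1) (fun p => by
        rw [abs_mul]
        exact mul_le_one₀ (hqb _) (abs_nonneg _) (hFb _))
  have hIR : Integrable (fun p : ℝ × ℝ × ℝ => vr G c (p.2.1 + p.1 * p.2.2) p.1
      * F (vr G c (p.2.1 + p.1 * p.2.2) p.1)) (H.prod (G.prod N)) :=
    integrable_of_bounded (hWm.mul (hF.comp hWm)).aestronglyMeasurable
      (C := 1) (fun p => by
        rw [abs_mul]
        exact mul_le_one₀ (abs_vr_le_one G c _ _) (abs_nonneg _) (hFb _))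
  rw [integral_prod _ hIL, integral_prod _ hIR]
  refine integral_congr_ae (hae.mono (fun s hs => ?_))
  exact per_s2 G c hs hF hFb


lemma master_sets (H : Measure ℝ) [IsProbabilityMeasure H] (hH : H (Ioi (0:ℝ)) = 1) (l : ℝ) :
    ∫ p : ℝ × ℝ × ℝ,
        ({p : ℝ × ℝ × ℝ | c ≤ p.2.1} ∩
          {p : ℝ × ℝ × ℝ | l ≤ vr G c (p.2.1 + p.1 * p.2.2) p.1}).indicator 1 p
        ∂(H.prod (G.prod (gaussianReal 0 1)))
      = ∫ p : ℝ × ℝ × ℝ,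
        ({p : ℝ × ℝ × ℝ | l ≤ vr G c (p.2.1 + p.1 * p.2.2) p.1}).indicator
          (fun p : ℝ × ℝ × ℝ => vr G c (p.2.1 + p.1 * p.2.2) p.1) p
        ∂(H.prod (G.prod (gaussianReal 0 1))) := by
  have hFm : Measurable ((Ici l).indicator (fun _ => (1:ℝ))) :=
    measurable_const.indicator measurableSet_Ici
  have hFb : ∀ x : ℝ, |(Ici l).indicator (fun _ => (1:ℝ)) x| ≤ 1 := fun x => by
    by_cases hx : x ∈ Ici l <;> simp [indicator_apply, hx]
  have h := master G c H hH hFm hFb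
  calc ∫ p : ℝ × ℝ × ℝ,
        ({p : ℝ × ℝ × ℝ | c ≤ p.2.1} ∩
          {p : ℝ × ℝ × ℝ | l ≤ vr G c (p.2.1 + p.1 * p.2.2) p.1}).indicator 1 p
        ∂(H.prod (G.prod (gaussianReal 0 1)))
      = ∫ p : ℝ × ℝ × ℝ, (Ici c).indicator (fun _ => (1:ℝ)) p.2.1
          * (Ici l).indicator (fun _ => (1:ℝ)) (vr G c (p.2.1 + p.1 * p.2.2) p.1)
          ∂(H.prod (G.prod (gaussianReal 0 1))) := by
        refine integral_congr_ae (ae_of_all _ (fun p => ?_))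
        by_cases h1 : c ≤ p.2.1 <;> by_cases h2 : l ≤ vr G c (p.2.1 + p.1 * p.2.2) p.1 <;>
          simp [indicator_apply, h1, h2, mem_Ici, mem_inter_iff, mem_setOf_eq]
    _ = ∫ p : ℝ × ℝ × ℝ, vr G c (p.2.1 + p.1 * p.2.2) p.1
          * (Ici l).indicator (fun _ => (1:ℝ)) (vr G c (p.2.1 + p.1 * p.2.2) p.1)
          ∂(H.prod (G.prod (gaussianReal 0 1))) := h
    _ = ∫ p : ℝ × ℝ × ℝ,
        ({p : ℝ × ℝ × ℝ | l ≤ vr G c (p.2.1 + p.1 * p.2.2) p.1}).indicator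
          (fun p : ℝ × ℝ × ℝ => vr G c (p.2.1 + p.1 * p.2.2) p.1) p
        ∂(H.prod (G.prod (gaussianReal 0 1))) := by
        refine integral_congr_ae (ae_of_all _ (fun p => ?_))
        by_cases h2 : l ≤ vr G c (p.2.1 + p.1 * p.2.2) p.1 <;>
          simp [indicator_apply, h2, mem_Ici, mem_setOf_eq]

/-- Right-continuity at the infimum: if a set-integral constraint holds on a set `S` of
thresholds, it holds at `sInf S`. -/
lemma sInf_le_of_setIntegral {Ω : Type*} [MeasureSpace Ω] [IsProbabilityMeasure (ℙ : Measure Ω)]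
    {V h : Ω → ℝ} (hVm : Measurable V) (hatom : ∀ x : ℝ, ℙ {ω | V ω = x} = 0)
    (hInt : Integrable h ℙ) {S : Set ℝ} {a : ℝ} (hS : S.Nonempty) (hB : BddBelow S)
    (hmem : ∀ l ∈ S, ∫ ω in {ω' | l ≤ V ω'}, h ω ∂ℙ ≤ a) :
    ∫ ω in {ω' | sInf S ≤ V ω'}, h ω ∂ℙ ≤ a := by
  obtain ⟨u, hu_anti, hu_tend, hu_mem⟩ := exists_seq_tendsto_sInf hS hB
  by_cases hcase : ∃ n, u n = sInf S
  · obtain ⟨n, hn⟩ := hcase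
    rw [← hn]
    exact hmem _ (hu_mem n)
  · push_neg at hcase
    have hlt : ∀ n, sInf S < u n :=
      fun n => lt_of_le_of_ne (csInf_le hB (hu_mem n)) (Ne.symm (hcase n))
    have hmeas : ∀ n, MeasurableSet {ω | u n ≤ V ω} :=
      fun n => measurableSet_le measurable_const hVm
    have hmono : Monotone (fun n => {ω | u n ≤ V ω}) :=
      fun m n hmn ω hω => le_trans (hu_anti hmn) hω
    have hunion : (⋃ n, {ω | u n ≤ V ω}) = {ω | sInf S < V ω} := by
      ext ω
      simp only [mem_iUnion, mem_setOf_eq]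
      constructor
      · rintro ⟨n, hn⟩
        exact lt_of_lt_of_le (hlt n) hn
      · intro hω
        obtain ⟨n, hn⟩ := (hu_tend.eventually_lt_const hω).exists
        exact ⟨n, hn.le⟩
    have htend := tendsto_setIntegral_of_monotone hmeas hmono (hInt.integrableOn)
    rw [hunion] at htend
    have hlim : ∫ ω in {ω' | sInf S < V ω'}, h ω ∂ℙ ≤ a :=
      le_of_tendsto htend (Eventually.of_forall (fun n => hmem _ (hu_mem n)))
    have hsets : {ω | sInf S ≤ V ω} =ᵐ[ℙ] {ω | sInf S < V ω} := by
      rw [ae_eq_set]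
      constructor
      · refine measure_mono_null (fun ω hω => ?_) (hatom (sInf S))
        exact le_antisymm (not_lt.mp hω.2) hω.1
      · have he : {ω | sInf S < V ω} \ {ω | sInf S ≤ V ω} = (∅ : Set Ω) := by
          ext ω
          simp only [mem_diff, mem_setOf_eq, mem_empty_iff_false, iff_false, not_and, not_not]
          exact fun h1 => h1.le
        rw [he]
        exact measure_empty
    rw [setIntegral_congr_set hsets]
    exact hlim

end SelP2

open SelP2 in
/-- Proposition 2 (optimal selection with heterogeneous known variances): the thresholding
rule on the posterior tail probability `V = v(Y, σ)` at `λ* = max(λ₁*, λ₂*)` satisfies the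
capacity constraint at level `α` and the marginal FDR constraint at level `γ`, and it
maximizes the probability of true discoveries among all threshold rules satisfying both
constraints. -/
theorem optimal_selection_heterogeneous_known_variances
    {Ω : Type*} [MeasureSpace Ω] [IsProbabilityMeasure (ℙ : Measure Ω)]
    (G H : Measure ℝ) [IsProbabilityMeasure G] [IsProbabilityMeasure H]
    (hH : H (Ioi (0:ℝ)) = 1)
    (α γ : ℝ) (hα : α ∈ Ioo (0:ℝ) 1) (hγ : γ ∈ Ioo (0:ℝ) 1) (hγα : γ < 1 - α)
    (θ σ Z Y : Ω → ℝ) (hθm : Measurable θ) (hσm : Measurable σ) (hZm : Measurable Z)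
    (hindep : iIndepFun ![θ, σ, Z] ℙ)
    (hθ : Measure.map θ ℙ = G) (hσ : Measure.map σ ℙ = H)
    (hZ : Measure.map Z ℙ = gaussianReal 0 1)
    (hY : ∀ ω, Y ω = θ ω + σ ω * Z ω)
    (c : ℝ) (hc : (ℙ {ω | c ≤ θ ω}).toReal = α)
    (v : ℝ → ℝ → ℝ)
    (hv : ∀ y s, v y s =
      (∫ t in Ici c, (1 / s) * stdGauss ((y - t) / s) ∂G) /
      (∫ t, (1 / s) * stdGauss ((y - t) / s) ∂G))
    (V : Ω → ℝ) (hV : ∀ ω, V ω = v (Y ω) (σ ω))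
    (hatomless : ∀ x : ℝ, ℙ {ω | V ω = x} = 0)
    (l1 l2 lstar : ℝ)
    (hl1 : l1 = sInf {l : ℝ | l ∈ Icc (0:ℝ) 1 ∧
      ∫ ω in {ω' | l ≤ V ω'}, (1 - V ω - γ) ∂ℙ ≤ 0})
    (hl2 : l2 = sInf {l : ℝ | l ∈ Icc (0:ℝ) 1 ∧ (ℙ {ω | l ≤ V ω}).toReal ≤ α})
    (hls : lstar = max l1 l2) :
    (ℙ {ω | lstar ≤ V ω}).toReal ≤ α ∧
    (ℙ ({ω | θ ω < c} ∩ {ω | lstar ≤ V ω})).toReal ≤ γ * (ℙ {ω | lstar ≤ V ω}).toReal ∧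
    ∀ l ∈ Icc (0:ℝ) 1,
      (ℙ {ω | l ≤ V ω}).toReal ≤ α →
      (ℙ ({ω | θ ω < c} ∩ {ω | l ≤ V ω})).toReal ≤ γ * (ℙ {ω | l ≤ V ω}).toReal →
      (ℙ ({ω | c ≤ θ ω} ∩ {ω | l ≤ V ω})).toReal ≤
        (ℙ ({ω | c ≤ θ ω} ∩ {ω | lstar ≤ V ω})).toReal := by
  obtain ⟨hα0, hα1⟩ := hα
  obtain ⟨hγ0, hγ1⟩ := hγ
  have hvr : ∀ y s, v y s = SelP2.vr G c y s := fun y s => by rw [hv]; rfl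
  have hVmem : ∀ ω, V ω ∈ Icc (0:ℝ) 1 := fun ω => by
    rw [hV, hvr]; exact SelP2.vr_mem_Icc G c _ _
  have hYm : Measurable Y := by
    have hYe : Y = fun ω => θ ω + σ ω * Z ω := funext hY
    rw [hYe]; fun_prop
  have hVf : V = fun ω => SelP2.vr G c (Y ω) (σ ω) := funext (fun ω => by rw [hV, hvr])
  have hVm : Measurable V := by
    rw [hVf]; exact (SelP2.measurable_vr G c).comp (hYm.prodMk hσm)
  have hSet : ∀ l : ℝ, MeasurableSet {ω | l ≤ V ω} :=
    fun l => measurableSet_le measurable_const hVm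
  have hθSet : MeasurableSet {ω | θ ω < c} := measurableSet_lt hθm measurable_const
  have hθSet' : MeasurableSet {ω | c ≤ θ ω} := measurableSet_le measurable_const hθm
  have hVInt : Integrable V ℙ := SelP2.integrable_of_bounded hVm.aestronglyMeasurable
    (C := 1) (fun ω => by
      have hm := hVmem ω
      rw [abs_le]; exact ⟨by linarith [hm.1], hm.2⟩)
  have hhInt : Integrable (fun ω => 1 - V ω - γ) ℙ :=
    ((integrable_const (1:ℝ)).sub hVInt).sub (integrable_const γ)
  -- joint law
  have hfmeas : ∀ i, Measurable (![θ, σ, Z] i) := fun i => by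
    fin_cases i
    · exact hθm
    · exact hσm
    · exact hZm
  have hIndep1 : IndepFun (fun ω => (θ ω, Z ω)) σ ℙ := by
    have h := hindep.indepFun_prodMk hfmeas 0 2 1 (by decide) (by decide)
    simpa using h
  have hIndep2 : IndepFun θ Z ℙ := by
    have h := hindep.indepFun (i := 0) (j := 2) (by decide)
    simpa using h
  have hmapθZ : Measure.map (fun ω => (θ ω, Z ω)) ℙ = G.prod (gaussianReal 0 1) := by
    have h := (indepFun_iff_map_prod_eq_prod_map_map hθm.aemeasurable hZm.aemeasurable).mp hIndep2
    rw [h, hθ, hZ]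
  have hmapT : Measure.map (fun ω => (σ ω, (θ ω, Z ω))) ℙ
      = H.prod (G.prod (gaussianReal 0 1)) := by
    have h := (indepFun_iff_map_prod_eq_prod_map_map hσm.aemeasurable
      (hθm.prodMk hZm).aemeasurable).mp hIndep1.symm
    rw [h, hσ, hmapθZ]
  have hTm : Measurable (fun ω => (σ ω, (θ ω, Z ω))) := hσm.prodMk (hθm.prodMk hZm)
  have hWm : Measurable (fun p : ℝ × ℝ × ℝ => SelP2.vr G c (p.2.1 + p.1 * p.2.2) p.1) :=
    (SelP2.measurable_vr G c).comp
      ((by fun_prop : Measurable (fun p : ℝ × ℝ × ℝ => (p.2.1 + p.1 * p.2.2, p.1))))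
  have hVW : ∀ ω, V ω = SelP2.vr G c (θ ω + σ ω * Z ω) (σ ω) := fun ω => by
    rw [hV, hvr, hY]
  -- Key identity
  have KI : ∀ l : ℝ, (ℙ ({ω | c ≤ θ ω} ∩ {ω | l ≤ V ω})).toReal
      = ∫ ω in {ω' | l ≤ V ω'}, V ω ∂ℙ := by
    intro l
    have hS2meas : MeasurableSet {p : ℝ × ℝ × ℝ | l ≤ SelP2.vr G c (p.2.1 + p.1 * p.2.2) p.1} :=
      measurableSet_le measurable_const hWm
    have hS1meas : MeasurableSet ({p : ℝ × ℝ × ℝ | c ≤ p.2.1}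
        ∩ {p : ℝ × ℝ × ℝ | l ≤ SelP2.vr G c (p.2.1 + p.1 * p.2.2) p.1}) :=
      (measurableSet_le measurable_const (by fun_prop)).inter hS2meas
    have hpre : {ω | c ≤ θ ω} ∩ {ω | l ≤ V ω}
        = (fun ω => (σ ω, (θ ω, Z ω))) ⁻¹' ({p : ℝ × ℝ × ℝ | c ≤ p.2.1}
          ∩ {p : ℝ × ℝ × ℝ | l ≤ SelP2.vr G c (p.2.1 + p.1 * p.2.2) p.1}) := by
      ext ω
      simp only [mem_inter_iff, mem_setOf_eq, mem_preimage]
      rw [hVW ω]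
    rw [hpre, ← Measure.map_apply hTm hS1meas, hmapT,
      ← measureReal_def, ← integral_indicator_one hS1meas, SelP2.master_sets G c H hH l,
      ← hmapT, integral_map hTm.aemeasurable (hWm.indicator hS2meas).aestronglyMeasurable]
    have hptw : ∀ ω : Ω, ({p : ℝ × ℝ × ℝ | l ≤ SelP2.vr G c (p.2.1 + p.1 * p.2.2) p.1}).indicator
        (fun p : ℝ × ℝ × ℝ => SelP2.vr G c (p.2.1 + p.1 * p.2.2) p.1) (σ ω, (θ ω, Z ω))
        = {ω' | l ≤ V ω'}.indicator V ω := by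
      intro ω
      by_cases hω : l ≤ V ω
      · rw [Set.indicator_of_mem (show (σ ω, θ ω, Z ω)
            ∈ {p : ℝ × ℝ × ℝ | l ≤ SelP2.vr G c (p.2.1 + p.1 * p.2.2) p.1} from by
              show l ≤ SelP2.vr G c (θ ω + σ ω * Z ω) (σ ω)
              rw [← hVW ω]; exact hω),
          Set.indicator_of_mem (show ω ∈ {ω' | l ≤ V ω'} from hω)]
        exact (hVW ω).symm
      · rw [Set.indicator_of_notMem (show (σ ω, θ ω, Z ω)
            ∉ {p : ℝ × ℝ × ℝ | l ≤ SelP2.vr G c (p.2.1 + p.1 * p.2.2) p.1} from by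
              show ¬ l ≤ SelP2.vr G c (θ ω + σ ω * Z ω) (σ ω)
              rw [← hVW ω]; exact hω),
          Set.indicator_of_notMem (show ω ∉ {ω' | l ≤ V ω'} from hω)]
    rw [integral_congr_ae (ae_of_all _ hptw), integral_indicator (hSet l)]
  -- complement identity
  have hPr_eq : ∀ l : ℝ, (ℙ {ω | l ≤ V ω}).toReal
      = (ℙ ({ω | θ ω < c} ∩ {ω | l ≤ V ω})).toReal
        + (ℙ ({ω | c ≤ θ ω} ∩ {ω | l ≤ V ω})).toReal := by
    intro l
    have hdisj : Disjoint ({ω | θ ω < c} ∩ {ω | l ≤ V ω}) ({ω | c ≤ θ ω} ∩ {ω | l ≤ V ω}) :=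
      Set.disjoint_left.mpr (fun ω h1 h2 => by
        have ha : θ ω < c := h1.1
        have hb : c ≤ θ ω := h2.1
        linarith)
    have hcover : {ω | l ≤ V ω}
        = ({ω | θ ω < c} ∩ {ω | l ≤ V ω}) ∪ ({ω | c ≤ θ ω} ∩ {ω | l ≤ V ω}) := by
      ext ω
      simp only [mem_union, mem_inter_iff, mem_setOf_eq]
      constructor
      · intro hω
        rcases lt_or_ge (θ ω) c with h | h
        · exact Or.inl ⟨h, hω⟩
        · exact Or.inr ⟨h, hω⟩
      · rintro (⟨_, hω⟩ | ⟨_, hω⟩) <;> exact hω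
    conv_lhs => rw [hcover]
    rw [measure_union hdisj (hθSet'.inter (hSet l)),
      ENNReal.toReal_add (measure_ne_top _ _) (measure_ne_top _ _)]
  have hFDR : ∀ l : ℝ, (ℙ ({ω | θ ω < c} ∩ {ω | l ≤ V ω})).toReal
      = (ℙ {ω | l ≤ V ω}).toReal - ∫ ω in {ω' | l ≤ V ω'}, V ω ∂ℙ := by
    intro l
    rw [hPr_eq l, KI l]; ring
  have hphi : ∀ l : ℝ, ∫ ω in {ω' | l ≤ V ω'}, (1 - V ω - γ) ∂ℙ
      = (1 - γ) * (ℙ {ω | l ≤ V ω}).toReal - ∫ ω in {ω' | l ≤ V ω'}, V ω ∂ℙ := by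
    intro l
    have h1 : ∫ ω in {ω' | l ≤ V ω'}, (1 - V ω - γ) ∂ℙ
        = ∫ ω in {ω' | l ≤ V ω'}, ((1 - γ) - V ω) ∂ℙ :=
      integral_congr_ae (ae_of_all _ (fun ω => by ring))
    rw [h1, integral_sub (integrableOn_const (C := (1 - γ : ℝ)) (measure_ne_top _ _))
      hVInt.integrableOn, setIntegral_const, smul_eq_mul, measureReal_def]
    ring
  -- atom at 1
  have hP1 : ℙ {ω | (1:ℝ) ≤ V ω} = 0 :=
    measure_mono_null (fun ω hω => le_antisymm (hVmem ω).2 hω) (hatomless 1)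
  have hint1 : ∀ h : Ω → ℝ, ∫ ω in {ω' | (1:ℝ) ≤ V ω'}, h ω ∂ℙ = 0 := fun h => by
    rw [Measure.restrict_eq_zero.mpr hP1, integral_zero_measure]
  have h1S1 : (1:ℝ) ∈ {l : ℝ | l ∈ Icc (0:ℝ) 1 ∧
      ∫ ω in {ω' | l ≤ V ω'}, (1 - V ω - γ) ∂ℙ ≤ 0} :=
    ⟨⟨zero_le_one, le_refl 1⟩, le_of_eq (hint1 _)⟩
  have h1S2 : (1:ℝ) ∈ {l : ℝ | l ∈ Icc (0:ℝ) 1 ∧ (ℙ {ω | l ≤ V ω}).toReal ≤ α} :=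
    ⟨⟨zero_le_one, le_refl 1⟩, by rw [hP1]; simpa using hα0.le⟩
  have hBdd1 : BddBelow {l : ℝ | l ∈ Icc (0:ℝ) 1 ∧
      ∫ ω in {ω' | l ≤ V ω'}, (1 - V ω - γ) ∂ℙ ≤ 0} := ⟨0, fun b hb => hb.1.1⟩
  have hBdd2 : BddBelow {l : ℝ | l ∈ Icc (0:ℝ) 1 ∧ (ℙ {ω | l ≤ V ω}).toReal ≤ α} :=
    ⟨0, fun b hb => hb.1.1⟩
  have hl1_le_one : l1 ≤ 1 := by rw [hl1]; exact csInf_le hBdd1 h1S1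
  have hl2_le_one : l2 ≤ 1 := by rw [hl2]; exact csInf_le hBdd2 h1S2
  have hlstar_le_one : lstar ≤ 1 := by rw [hls]; exact max_le hl1_le_one hl2_le_one
  have hl1_le : l1 ≤ lstar := by rw [hls]; exact le_max_left _ _
  have hl2_le : l2 ≤ lstar := by rw [hls]; exact le_max_right _ _
  have hPrMono : ∀ a b : ℝ, a ≤ b → (ℙ {ω | b ≤ V ω}).toReal ≤ (ℙ {ω | a ≤ V ω}).toReal :=
    fun a b hab => ENNReal.toReal_mono (measure_ne_top _ _)
      (measure_mono (fun ω hω => le_trans hab hω))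
  have hA2 : (ℙ {ω | l2 ≤ V ω}).toReal ≤ α := by
    have key := SelP2.sInf_le_of_setIntegral (h := fun _ : Ω => (1:ℝ)) hVm hatomless
      (integrable_const 1) ⟨1, h1S2⟩ hBdd2 (fun l hl => by
        rw [setIntegral_const, smul_eq_mul, mul_one]; exact hl.2)
    rw [setIntegral_const, smul_eq_mul, mul_one] at key
    rw [hl2]; exact key
  have hphi1 : ∫ ω in {ω' | l1 ≤ V ω'}, (1 - V ω - γ) ∂ℙ ≤ 0 := by
    rw [hl1]
    exact SelP2.sInf_le_of_setIntegral hVm hatomless hhInt ⟨1, h1S1⟩ hBdd1 (fun l hl => hl.2)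
  have hphistar : ∫ ω in {ω' | lstar ≤ V ω'}, (1 - V ω - γ) ∂ℙ ≤ 0 := by
    by_cases hcase : lstar ≤ 1 - γ
    · have hsub : {ω | lstar ≤ V ω} ⊆ {ω | l1 ≤ V ω} := fun ω hω => le_trans hl1_le hω
      have hdm : MeasurableSet ({ω | l1 ≤ V ω} \ {ω | lstar ≤ V ω}) :=
        (hSet l1).diff (hSet lstar)
      have hval : ∫ ω in {ω' | l1 ≤ V ω'}, (1 - V ω - γ) ∂ℙ
          = (∫ ω in {ω | l1 ≤ V ω} \ {ω | lstar ≤ V ω}, (1 - V ω - γ) ∂ℙ)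
            + ∫ ω in {ω' | lstar ≤ V ω'}, (1 - V ω - γ) ∂ℙ := by
        conv_lhs => rw [← diff_union_of_subset hsub]
        exact setIntegral_union disjoint_sdiff_left (hSet lstar)
          hhInt.integrableOn hhInt.integrableOn
      have hpos : 0 ≤ ∫ ω in {ω | l1 ≤ V ω} \ {ω | lstar ≤ V ω}, (1 - V ω - γ) ∂ℙ := by
        refine setIntegral_nonneg hdm (fun ω hω => ?_)
        have h2 : V ω < lstar := not_le.mp hω.2
        linarith
      linarith [hphi1, hval, hpos]
    · push_neg at hcase
      have hsub : {ω | (1:ℝ) ≤ V ω} ⊆ {ω | lstar ≤ V ω} :=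
        fun ω hω => le_trans hlstar_le_one hω
      have hdm : MeasurableSet ({ω | lstar ≤ V ω} \ {ω | (1:ℝ) ≤ V ω}) :=
        (hSet lstar).diff (hSet 1)
      have hval : ∫ ω in {ω' | lstar ≤ V ω'}, (1 - V ω - γ) ∂ℙ
          = (∫ ω in {ω | lstar ≤ V ω} \ {ω | (1:ℝ) ≤ V ω}, (1 - V ω - γ) ∂ℙ)
            + ∫ ω in {ω' | (1:ℝ) ≤ V ω'}, (1 - V ω - γ) ∂ℙ := by
        conv_lhs => rw [← diff_union_of_subset hsub]
        exact setIntegral_union disjoint_sdiff_left (hSet 1)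
          hhInt.integrableOn hhInt.integrableOn
      have hneg : ∫ ω in {ω | lstar ≤ V ω} \ {ω | (1:ℝ) ≤ V ω}, (1 - V ω - γ) ∂ℙ ≤ 0 := by
        refine setIntegral_nonpos hdm (fun ω hω => ?_)
        have h2 : lstar ≤ V ω := hω.1
        linarith
      rw [hval, hint1]
      linarith [hneg]
  have hout2 : (ℙ ({ω | θ ω < c} ∩ {ω | lstar ≤ V ω})).toReal
      ≤ γ * (ℙ {ω | lstar ≤ V ω}).toReal := by
    have h1 := hphi lstar
    have h2 := hFDR lstar
    linarith [hphistar]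
  refine ⟨?_, hout2, ?_⟩
  · calc (ℙ {ω | lstar ≤ V ω}).toReal
        ≤ (ℙ {ω | l2 ≤ V ω}).toReal := hPrMono _ _ hl2_le
      _ ≤ α := hA2
  · intro l hlmem hcap hfdr
    by_cases hge : lstar ≤ l
    · rw [KI l, KI lstar]
      refine setIntegral_mono_set hVInt.integrableOn ?_ ?_
      · exact ae_restrict_of_ae (ae_of_all _ (fun ω => (hVmem ω).1))
      · exact HasSubset.Subset.eventuallyLE (fun ω hω => le_trans hge hω)
    · push_neg at hge
      exfalso
      rw [hls] at hge
      rcases lt_max_iff.mp hge with hcase | hcase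
      · have hmem : l ∈ {l : ℝ | l ∈ Icc (0:ℝ) 1 ∧
            ∫ ω in {ω' | l ≤ V ω'}, (1 - V ω - γ) ∂ℙ ≤ 0} := by
          refine ⟨hlmem, ?_⟩
          have h1 := hphi l
          have h2 := hFDR l
          linarith [hfdr]
        have h3 : l1 ≤ l := by rw [hl1]; exact csInf_le hBdd1 hmem
        linarith
      · have hmem : l ∈ {l : ℝ | l ∈ Icc (0:ℝ) 1 ∧ (ℙ {ω | l ≤ V ω}).toReal ≤ α} :=
          ⟨hlmem, hcap⟩
        have h3 : l2 ≤ l := by rw [hl2]; exact csInf_le hBdd2 hmem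
        linarith
end

section
/- (Monotonicity of the marginal FDR in the threshold.) For a random variable V with values in [0,1], define Q(t) = E[(1 − V) 1{V ≥ t}] / ℙ(V ≥ t) whenever ℙ(V ≥ t) > 0 (Q(t) is the marginal false discovery rate of the thresholding rule 1{V ≥ t} when V is the posterior probability of the alternative). Then Q is nonincreasing: for every t ≤ t′ in [0,1] with ℙ(V ≥ t′) > 0, Q(t) ≥ Q(t′). -/
open MeasureTheory ProbabilityTheory Filter Set

/-- Monotonicity of the marginal FDR in the threshold: for a `[0,1]`-valued random variable
`V`, the marginal false discovery rate `Q(t) = E[(1 − V) 1{V ≥ t}] / ℙ(V ≥ t)` of the rule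
`1{V ≥ t}` is nonincreasing in `t`. -/
theorem mFDR_antitone_in_threshold
    {Ω : Type*} [MeasureSpace Ω] [IsProbabilityMeasure (ℙ : Measure Ω)]
    (V : Ω → ℝ) (hVm : Measurable V) (hV01 : ∀ ω, V ω ∈ Icc (0:ℝ) 1)
    (t t' : ℝ) (htt' : t ≤ t') (ht : t ∈ Icc (0:ℝ) 1) (ht' : t' ∈ Icc (0:ℝ) 1)
    (hpos : 0 < (ℙ {ω | t' ≤ V ω}).toReal) :
    (∫ ω in {ω' | t' ≤ V ω'}, (1 - V ω) ∂ℙ) / (ℙ {ω | t' ≤ V ω}).toReal ≤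
      (∫ ω in {ω' | t ≤ V ω'}, (1 - V ω) ∂ℙ) / (ℙ {ω | t ≤ V ω}).toReal := by
  set A := {ω | t ≤ V ω} with hA
  set B := {ω | t' ≤ V ω} with hB
  have hAm : MeasurableSet A := measurableSet_le measurable_const hVm
  have hBm : MeasurableSet B := measurableSet_le measurable_const hVm
  have hBA : B ⊆ A := fun ω hω => le_trans htt' hω
  set C := A \ B with hC
  have hCm : MeasurableSet C := hAm.diff hBm
  -- integrability
  have hint : Integrable (fun ω => 1 - V ω) ℙ := by
    apply (integrable_const (1:ℝ)).mono'
      ((measurable_const.sub hVm).aestronglyMeasurable)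
    refine Eventually.of_forall fun ω => ?_
    have := hV01 ω
    rw [Real.norm_eq_abs, abs_le]
    simp only [Pi.sub_apply]
    constructor <;> [linarith [this.2]; linarith [this.1]]
  have hintB : IntegrableOn (fun ω => 1 - V ω) B ℙ := hint.integrableOn
  have hintC : IntegrableOn (fun ω => 1 - V ω) C ℙ := hint.integrableOn
  -- measures
  have hfinB : ℙ B ≠ ⊤ := measure_ne_top _ _
  have hfinC : ℙ C ≠ ⊤ := measure_ne_top _ _
  set p := (ℙ B).toReal with hp
  set q := (ℙ C).toReal with hq
  have hqnn : 0 ≤ q := ENNReal.toReal_nonneg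
  -- split integral over A
  have hsplit : (∫ ω in A, (1 - V ω) ∂ℙ)
      = (∫ ω in B, (1 - V ω) ∂ℙ) + (∫ ω in C, (1 - V ω) ∂ℙ) := by
    rw [← setIntegral_union disjoint_sdiff_self_right hCm hintB hintC,
      union_diff_cancel hBA]
  have hPA : (ℙ A).toReal = p + q := by
    rw [hp, hq, ← ENNReal.toReal_add hfinB hfinC,
      measure_diff hBA hBm.nullMeasurableSet hfinB,
      add_tsub_cancel_of_le (measure_mono hBA)]
  -- bounds on the integrals
  have hub : (∫ ω in B, (1 - V ω) ∂ℙ) ≤ (1 - t') * p := by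
    have : (∫ ω in B, (1 - V ω) ∂ℙ) ≤ ∫ _ω in B, (1 - t') ∂ℙ := by
      apply setIntegral_mono_on hintB (integrableOn_const hfinB) hBm
      intro ω hω
      simp only [hB, mem_setOf_eq] at hω
      linarith
    simpa [smul_eq_mul, mul_comm, measureReal_def] using this
  have hlb : (1 - t') * q ≤ (∫ ω in C, (1 - V ω) ∂ℙ) := by
    have : (∫ _ω in C, (1 - t') ∂ℙ) ≤ ∫ ω in C, (1 - V ω) ∂ℙ := by
      apply setIntegral_mono_on (integrableOn_const hfinC) hintC hCm
      intro ω hω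
      have : V ω < t' := by
        rcases hω with ⟨_, hω2⟩
        simp only [hB, mem_setOf_eq] at hω2
        linarith [not_le.mp hω2]
      linarith
    simpa [smul_eq_mul, mul_comm, measureReal_def] using this
  have haB : 0 ≤ (∫ ω in B, (1 - V ω) ∂ℙ) := by
    apply setIntegral_nonneg hBm
    intro ω _
    linarith [(hV01 ω).2]
  -- conclude
  rw [hsplit, hPA, div_le_div_iff₀ hpos (by linarith)]
  set a := (∫ ω in B, (1 - V ω) ∂ℙ)
  set b := (∫ ω in C, (1 - V ω) ∂ℙ)
  nlinarith [mul_nonneg hqnn hpos.le]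
end

section
/- (Lemma 3, monotone likelihood ratio and FDR thresholds.) Let h₁, h₂ : [0,1] → [0,∞) be probability densities with the monotone likelihood ratio property: h₁ = ρ · h₂ almost everywhere for some nondecreasing ρ : [0,1] → [0,∞]. Then: (i) for every λ ∈ [0,1) such that ∫_λ^1 h₁(v) dv > 0 and ∫_λ^1 h₂(v) dv > 0, (∫_λ^1 (1−v) h₁(v) dv)/(∫_λ^1 h₁(v) dv) ≤ (∫_λ^1 (1−v) h₂(v) dv)/(∫_λ^1 h₂(v) dv); (ii) consequently, for every γ ∈ (0,1), writing S_j = {λ ∈ [0,1] : ∫_λ^1 (1−v) h_j(v) dv ≤ γ ∫_λ^1 h_j(v) dv}, if S₂ is nonempty then S₂ ⊆ S₁ and inf S₁ ≤ inf S₂. -/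
open MeasureTheory ProbabilityTheory Filter Set

lemma fubini_tail (f : ℝ → ℝ) (hm : Measurable f) (hpos : ∀ x, 0 ≤ f x)
    (l : ℝ) (hl1 : l ≤ 1) (hint : IntervalIntegrable f volume l 1) :
    ∫ x in l..1, (1 - x) * f x = ∫ t in l..1, (∫ x in l..t, f x) := by
  set μ : Measure ℝ := volume.restrict (Ioc l 1) with hμ
  have hfin : IsFiniteMeasure μ :=
    ⟨by rw [hμ, Measure.restrict_apply_univ]; exact measure_Ioc_lt_top⟩
  set F : ℝ → ℝ → ℝ := fun x t => if x ≤ t then f x else 0 with hF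
  have hintF : Integrable (Function.uncurry F) (μ.prod μ) := by
    have hmeas : Measurable (Function.uncurry F) := by
      apply Measurable.ite (measurableSet_le measurable_fst measurable_snd)
      · exact hm.comp measurable_fst
      · exact measurable_const
    have hbound : Integrable (fun z : ℝ × ℝ => f z.1 * (1 : ℝ)) (μ.prod μ) :=
      Integrable.mul_prod (hint.1) (integrable_const 1)
    refine hbound.mono' hmeas.aestronglyMeasurable ?_
    refine Filter.Eventually.of_forall fun z => ?_
    simp only [Function.uncurry, hF, mul_one]
    by_cases h : z.1 ≤ z.2 <;> simp [h, abs_of_nonneg (hpos _), hpos z.1]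
  have swap := MeasureTheory.integral_integral_swap hintF
  have left : ∀ x ∈ Ioc l 1, (∫ t, F x t ∂μ) = (1 - x) * f x := by
    intro x hx
    have : (fun t => F x t) = (Ici x).indicator (fun _ => f x) := by
      ext t; by_cases h : x ≤ t <;> simp [hF, h, indicator_apply]
    rw [this, hμ, integral_indicator measurableSet_Ici,
      Measure.restrict_restrict measurableSet_Ici]
    have hset : Ici x ∩ Ioc l 1 = Icc x 1 := by
      ext y; simp only [mem_inter_iff, mem_Ici, mem_Ioc, mem_Icc]
      constructor
      · rintro ⟨h1, _, h3⟩; exact ⟨h1, h3⟩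
      · rintro ⟨h1, h2⟩; exact ⟨h1, lt_of_lt_of_le hx.1 h1, h2⟩
    rw [hset]
    simp [Real.volume_Icc, ENNReal.toReal_ofReal (by linarith [hx.2] : (0:ℝ) ≤ 1 - x), mul_comm, hx.2]
  have right : ∀ t ∈ Ioc l 1, (∫ x, F x t ∂μ) = ∫ x in l..t, f x := by
    intro t ht
    have : (fun x => F x t) = (Iic t).indicator f := by
      ext x; by_cases h : x ≤ t <;> simp [hF, h, indicator_apply]
    rw [this, hμ, integral_indicator measurableSet_Iic,
      Measure.restrict_restrict measurableSet_Iic]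
    have hset : Iic t ∩ Ioc l 1 = Ioc l t := by
      ext y; simp only [mem_inter_iff, mem_Iic, mem_Ioc]
      constructor
      · rintro ⟨h1, h2, _⟩; exact ⟨h2, h1⟩
      · rintro ⟨h1, h2⟩; exact ⟨h2, h1, h2.trans ht.2⟩
    rw [hset, intervalIntegral.integral_of_le ht.1.le]
  calc ∫ x in l..1, (1 - x) * f x
      = ∫ x, (1 - x) * f x ∂μ := intervalIntegral.integral_of_le hl1
    _ = ∫ x, (∫ t, F x t ∂μ) ∂μ := by
        rw [hμ]
        exact (setIntegral_congr_fun measurableSet_Ioc fun x hx => (left x hx)).symm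
    _ = ∫ t, (∫ x, F x t ∂μ) ∂μ := swap
    _ = ∫ t, (∫ x in l..t, f x) ∂μ := by
        rw [hμ]
        exact setIntegral_congr_fun measurableSet_Ioc fun t ht => right t ht
    _ = ∫ t in l..1, (∫ x in l..t, f x) := (intervalIntegral.integral_of_le hl1).symm

lemma mlr_key (h₁ h₂ : ℝ → ℝ)
    (hpos₁ : ∀ x, 0 ≤ h₁ x) (hpos₂ : ∀ x, 0 ≤ h₂ x)
    (hint₁ : IntervalIntegrable h₁ volume 0 1)
    (hint₂ : IntervalIntegrable h₂ volume 0 1)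
    (ρ : ℝ → ENNReal) (hρ : MonotoneOn ρ (Icc (0:ℝ) 1))
    (hmlr : ∀ᵐ x ∂(volume.restrict (Icc (0:ℝ) 1)),
      ENNReal.ofReal (h₁ x) = ρ x * ENNReal.ofReal (h₂ x))
    (l t : ℝ) (hl : 0 ≤ l) (hlt : l ≤ t) (ht : t ≤ 1) :
    (∫ x in t..1, h₂ x) * (∫ x in l..1, h₁ x) ≤
      (∫ x in t..1, h₁ x) * (∫ x in l..1, h₂ x) := by
  have hii : ∀ (f : ℝ → ℝ), IntervalIntegrable f volume 0 1 →
      ∀ a b : ℝ, 0 ≤ a → b ≤ 1 → a ≤ b → IntervalIntegrable f volume a b := by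
    intro f hf a b ha hb hab
    refine hf.mono_set ?_
    rw [uIcc_of_le hab, uIcc_of_le (zero_le_one)]
    exact Icc_subset_Icc ha hb
  have ht0 : 0 ≤ t := hl.trans hlt
  have hl1 : l ≤ 1 := hlt.trans ht
  have i1t : IntervalIntegrable h₁ volume t 1 := hii h₁ hint₁ t 1 ht0 le_rfl ht
  have i2t : IntervalIntegrable h₂ volume t 1 := hii h₂ hint₂ t 1 ht0 le_rfl ht
  have i1lt : IntervalIntegrable h₁ volume l t := hii h₁ hint₁ l t hl ht hlt
  have i2lt : IntervalIntegrable h₂ volume l t := hii h₂ hint₂ l t hl ht hlt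
  have i1l : IntervalIntegrable h₁ volume l 1 := hii h₁ hint₁ l 1 hl le_rfl hl1
  have i2l : IntervalIntegrable h₂ volume l 1 := hii h₂ hint₂ l 1 hl le_rfl hl1
  have nn : ∀ (f : ℝ → ℝ), (∀ x, 0 ≤ f x) → ∀ a b : ℝ, a ≤ b →
      (0:ℝ) ≤ ∫ x in a..b, f x := fun f hf a b hab =>
    intervalIntegral.integral_nonneg hab (fun u _ => hf u)
  have hmlr_t : ∀ᵐ x ∂(volume.restrict (Ioc t 1)),
      ENNReal.ofReal (h₁ x) = ρ x * ENNReal.ofReal (h₂ x) :=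
    ae_restrict_of_ae_restrict_of_subset
      (show Ioc t 1 ⊆ Icc 0 1 from fun x hx => ⟨ht0.trans hx.1.le, hx.2⟩) hmlr
  have hmlr_lt : ∀ᵐ x ∂(volume.restrict (Ioc l t)),
      ENNReal.ofReal (h₁ x) = ρ x * ENNReal.ofReal (h₂ x) :=
    ae_restrict_of_ae_restrict_of_subset
      (show Ioc l t ⊆ Icc 0 1 from fun x hx => ⟨hl.trans hx.1.le, hx.2.trans ht⟩) hmlr
  have htmem : t ∈ Icc (0:ℝ) 1 := ⟨ht0, ht⟩
  by_cases hc : ρ t = ⊤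
  · -- then h₂ = 0 a.e. on Ioc t 1, so ∫ t..1 h₂ = 0
    have hz : ∀ᵐ x ∂(volume.restrict (Ioc t 1)), h₂ x = 0 := by
      filter_upwards [hmlr_t, ae_restrict_mem measurableSet_Ioc] with x hx hxm
      have hxmem : x ∈ Icc (0:ℝ) 1 := ⟨ht0.trans hxm.1.le, hxm.2⟩
      have hρx : ρ x = ⊤ := by
        have := hρ htmem hxmem hxm.1.le
        rw [hc] at this; exact top_le_iff.mp this
      by_contra hne
      have hpos : 0 < h₂ x := lt_of_le_of_ne (hpos₂ x) (Ne.symm hne)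
      rw [hρx, ENNReal.top_mul (by simpa [ENNReal.ofReal_eq_zero] using hpos.not_ge)] at hx
      exact ENNReal.ofReal_ne_top hx
    have : (∫ x in t..1, h₂ x) = 0 := by
      rw [intervalIntegral.integral_of_le ht]
      exact integral_eq_zero_of_ae hz
    rw [this, zero_mul]
    exact mul_nonneg (nn h₁ hpos₁ t 1 ht) (nn h₂ hpos₂ l 1 hl1)
  · set c : ℝ := (ρ t).toReal with hcdef
    have hc0 : 0 ≤ c := ENNReal.toReal_nonneg
    have hct : ENNReal.ofReal c = ρ t := ENNReal.ofReal_toReal hc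
    -- on Ioc t 1 : c * h₂ ≤ h₁
    have hub : ∀ᵐ x ∂(volume.restrict (Ioc t 1)), c * h₂ x ≤ h₁ x := by
      filter_upwards [hmlr_t, ae_restrict_mem measurableSet_Ioc] with x hx hxm
      have hxmem : x ∈ Icc (0:ℝ) 1 := ⟨ht0.trans hxm.1.le, hxm.2⟩
      have hmono := hρ htmem hxmem hxm.1.le
      have : ENNReal.ofReal (c * h₂ x) ≤ ENNReal.ofReal (h₁ x) := by
        rw [ENNReal.ofReal_mul hc0, hct, hx]
        exact mul_le_mul_left hmono _
      exact (ENNReal.ofReal_le_ofReal_iff (hpos₁ x)).mp this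
    -- on Ioc l t : h₁ ≤ c * h₂
    have hlb : ∀ᵐ x ∂(volume.restrict (Ioc l t)), h₁ x ≤ c * h₂ x := by
      filter_upwards [hmlr_lt, ae_restrict_mem measurableSet_Ioc] with x hx hxm
      have hxmem : x ∈ Icc (0:ℝ) 1 := ⟨hl.trans hxm.1.le, hxm.2.trans ht⟩
      have hmono := hρ hxmem htmem hxm.2
      have : ENNReal.ofReal (h₁ x) ≤ ENNReal.ofReal (c * h₂ x) := by
        rw [ENNReal.ofReal_mul hc0, hct, hx]
        exact mul_le_mul_left hmono _
      exact (ENNReal.ofReal_le_ofReal_iff (mul_nonneg hc0 (hpos₂ x))).mp this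
    have hI1 : c * (∫ x in t..1, h₂ x) ≤ ∫ x in t..1, h₁ x := by
      rw [← intervalIntegral.integral_const_mul, intervalIntegral.integral_of_le ht,
        intervalIntegral.integral_of_le ht]
      exact setIntegral_mono_ae_restrict (i2t.const_mul c).1 i1t.1 hub
    have hI2 : (∫ x in l..t, h₁ x) ≤ c * ∫ x in l..t, h₂ x := by
      rw [← intervalIntegral.integral_const_mul, intervalIntegral.integral_of_le hlt,
        intervalIntegral.integral_of_le hlt]
      exact setIntegral_mono_ae_restrict i1lt.1 (i2lt.const_mul c).1 hlb
    have hsplit₁ : (∫ x in l..1, h₁ x) = (∫ x in l..t, h₁ x) + ∫ x in t..1, h₁ x :=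
      (intervalIntegral.integral_add_adjacent_intervals i1lt i1t).symm
    have hsplit₂ : (∫ x in l..1, h₂ x) = (∫ x in l..t, h₂ x) + ∫ x in t..1, h₂ x :=
      (intervalIntegral.integral_add_adjacent_intervals i2lt i2t).symm
    have n1 := nn h₁ hpos₁ l t hlt
    have n2 := nn h₂ hpos₂ l t hlt
    have n3 := nn h₁ hpos₁ t 1 ht
    have n4 := nn h₂ hpos₂ t 1 ht
    rw [hsplit₁, hsplit₂]
    nlinarith [mul_le_mul_of_nonneg_left hI2 n4, mul_le_mul_of_nonneg_right hI1 n2]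

lemma mlr_ratio_mono (h₁ h₂ : ℝ → ℝ) (hm₁ : Measurable h₁) (hm₂ : Measurable h₂)
    (hpos₁ : ∀ x, 0 ≤ h₁ x) (hpos₂ : ∀ x, 0 ≤ h₂ x)
    (hint₁ : IntervalIntegrable h₁ volume 0 1)
    (hint₂ : IntervalIntegrable h₂ volume 0 1)
    (ρ : ℝ → ENNReal) (hρ : MonotoneOn ρ (Icc (0:ℝ) 1))
    (hmlr : ∀ᵐ x ∂(volume.restrict (Icc (0:ℝ) 1)),
      ENNReal.ofReal (h₁ x) = ρ x * ENNReal.ofReal (h₂ x))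
    (l : ℝ) (hl : l ∈ Ico (0:ℝ) 1)
    (hp1 : 0 < (∫ x in l..1, h₁ x)) (hp2 : 0 < (∫ x in l..1, h₂ x)) :
    (∫ x in l..1, (1 - x) * h₁ x) / (∫ x in l..1, h₁ x) ≤
      (∫ x in l..1, (1 - x) * h₂ x) / (∫ x in l..1, h₂ x) := by
  obtain ⟨hl0, hl1'⟩ := hl
  have hl1 : l ≤ 1 := hl1'.le
  have hii : ∀ (f : ℝ → ℝ), IntervalIntegrable f volume 0 1 →
      ∀ a b : ℝ, 0 ≤ a → b ≤ 1 → a ≤ b → IntervalIntegrable f volume a b := by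
    intro f hf a b ha hb hab
    refine hf.mono_set ?_
    rw [uIcc_of_le hab, uIcc_of_le (zero_le_one)]
    exact Icc_subset_Icc ha hb
  have i1l : IntervalIntegrable h₁ volume l 1 := hii h₁ hint₁ l 1 hl0 le_rfl hl1
  have i2l : IntervalIntegrable h₂ volume l 1 := hii h₂ hint₂ l 1 hl0 le_rfl hl1
  rw [div_le_div_iff₀ hp1 hp2, fubini_tail h₁ hm₁ hpos₁ l hl1 i1l,
    fubini_tail h₂ hm₂ hpos₂ l hl1 i2l, ← intervalIntegral.integral_mul_const,
    ← intervalIntegral.integral_mul_const]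
  have c1 : ContinuousOn (fun t => (∫ x in l..t, h₁ x) * (∫ x in l..1, h₂ x))
      (uIcc l 1) :=
    (intervalIntegral.continuousOn_primitive_interval' i1l left_mem_uIcc).mul
      continuousOn_const
  have c2 : ContinuousOn (fun t => (∫ x in l..t, h₂ x) * (∫ x in l..1, h₁ x))
      (uIcc l 1) :=
    (intervalIntegral.continuousOn_primitive_interval' i2l left_mem_uIcc).mul
      continuousOn_const
  refine intervalIntegral.integral_mono_on hl1 c1.intervalIntegrable
    c2.intervalIntegrable ?_
  intro t htm
  obtain ⟨hlt, ht1⟩ := htm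
  have ht0 : 0 ≤ t := hl0.trans hlt
  have i1lt : IntervalIntegrable h₁ volume l t := hii h₁ hint₁ l t hl0 ht1 hlt
  have i2lt : IntervalIntegrable h₂ volume l t := hii h₂ hint₂ l t hl0 ht1 hlt
  have i1t : IntervalIntegrable h₁ volume t 1 := hii h₁ hint₁ t 1 ht0 le_rfl ht1
  have i2t : IntervalIntegrable h₂ volume t 1 := hii h₂ hint₂ t 1 ht0 le_rfl ht1
  have hs1 : (∫ x in l..t, h₁ x) + (∫ x in t..1, h₁ x) = ∫ x in l..1, h₁ x :=
    intervalIntegral.integral_add_adjacent_intervals i1lt i1t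
  have hs2 : (∫ x in l..t, h₂ x) + (∫ x in t..1, h₂ x) = ∫ x in l..1, h₂ x :=
    intervalIntegral.integral_add_adjacent_intervals i2lt i2t
  have hkey := mlr_key h₁ h₂ hpos₁ hpos₂ hint₁ hint₂ ρ hρ hmlr l t hl0 hlt ht1
  nlinarith [hkey, hs1, hs2]

/-- Lemma 3 (monotone likelihood ratio and FDR thresholds): if `h₁ = ρ · h₂` a.e. on `[0,1]`
for a nondecreasing `ρ : [0,1] → [0,∞]`, then (i) the marginal FDR of `h₁` at any threshold
is below that of `h₂`, and (ii) the set of thresholds at which the FDR constraint holds for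
`h₂` is contained in that for `h₁`, so the optimal threshold for `h₁` is smaller. -/
theorem mlr_fdr_threshold_comparison
    (h₁ h₂ : ℝ → ℝ) (hm₁ : Measurable h₁) (hm₂ : Measurable h₂)
    (hpos₁ : ∀ x, 0 ≤ h₁ x) (hpos₂ : ∀ x, 0 ≤ h₂ x)
    (hint₁ : IntervalIntegrable h₁ MeasureTheory.volume 0 1)
    (hint₂ : IntervalIntegrable h₂ MeasureTheory.volume 0 1)
    (hone₁ : (∫ x in (0:ℝ)..1, h₁ x) = 1) (hone₂ : (∫ x in (0:ℝ)..1, h₂ x) = 1)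
    (ρ : ℝ → ENNReal) (hρ : MonotoneOn ρ (Icc (0:ℝ) 1))
    (hmlr : ∀ᵐ x ∂(MeasureTheory.volume.restrict (Icc (0:ℝ) 1)),
      ENNReal.ofReal (h₁ x) = ρ x * ENNReal.ofReal (h₂ x))
    (γ : ℝ) (hγ : γ ∈ Ioo (0:ℝ) 1) :
    (∀ l ∈ Ico (0:ℝ) 1,
      0 < (∫ x in l..1, h₁ x) → 0 < (∫ x in l..1, h₂ x) →
      (∫ x in l..1, (1 - x) * h₁ x) / (∫ x in l..1, h₁ x) ≤
        (∫ x in l..1, (1 - x) * h₂ x) / (∫ x in l..1, h₂ x)) ∧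
    ({l : ℝ | l ∈ Icc (0:ℝ) 1 ∧
        (∫ x in l..1, (1 - x) * h₂ x) ≤ γ * ∫ x in l..1, h₂ x}.Nonempty →
      ({l : ℝ | l ∈ Icc (0:ℝ) 1 ∧
          (∫ x in l..1, (1 - x) * h₂ x) ≤ γ * ∫ x in l..1, h₂ x} ⊆
        {l : ℝ | l ∈ Icc (0:ℝ) 1 ∧
          (∫ x in l..1, (1 - x) * h₁ x) ≤ γ * ∫ x in l..1, h₁ x}) ∧
      sInf {l : ℝ | l ∈ Icc (0:ℝ) 1 ∧
          (∫ x in l..1, (1 - x) * h₁ x) ≤ γ * ∫ x in l..1, h₁ x} ≤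
        sInf {l : ℝ | l ∈ Icc (0:ℝ) 1 ∧
          (∫ x in l..1, (1 - x) * h₂ x) ≤ γ * ∫ x in l..1, h₂ x}) := by
  have hii : ∀ (f : ℝ → ℝ), IntervalIntegrable f volume 0 1 →
      ∀ a b : ℝ, 0 ≤ a → b ≤ 1 → a ≤ b → IntervalIntegrable f volume a b := by
    intro f hf a b ha hb hab
    refine hf.mono_set ?_
    rw [uIcc_of_le hab, uIcc_of_le (zero_le_one)]
    exact Icc_subset_Icc ha hb
  have part1 : ∀ l ∈ Ico (0:ℝ) 1,
      0 < (∫ x in l..1, h₁ x) → 0 < (∫ x in l..1, h₂ x) →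
      (∫ x in l..1, (1 - x) * h₁ x) / (∫ x in l..1, h₁ x) ≤
        (∫ x in l..1, (1 - x) * h₂ x) / (∫ x in l..1, h₂ x) := fun l hl hp1 hp2 =>
    mlr_ratio_mono h₁ h₂ hm₁ hm₂ hpos₁ hpos₂ hint₁ hint₂ ρ hρ hmlr l hl hp1 hp2
  refine ⟨part1, fun hne => ?_⟩
  -- subset claim
  have hsub : {l : ℝ | l ∈ Icc (0:ℝ) 1 ∧
        (∫ x in l..1, (1 - x) * h₂ x) ≤ γ * ∫ x in l..1, h₂ x} ⊆
      {l : ℝ | l ∈ Icc (0:ℝ) 1 ∧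
        (∫ x in l..1, (1 - x) * h₁ x) ≤ γ * ∫ x in l..1, h₁ x} := by
    rintro l ⟨⟨hl0, hl1⟩, hcond⟩
    refine ⟨⟨hl0, hl1⟩, ?_⟩
    have i1l : IntervalIntegrable h₁ volume l 1 := hii h₁ hint₁ l 1 hl0 le_rfl hl1
    have i2l : IntervalIntegrable h₂ volume l 1 := hii h₂ hint₂ l 1 hl0 le_rfl hl1
    by_cases hz : (∫ x in l..1, h₁ x) = 0
    · -- h₁ vanishes a.e. on (l,1]
      have h1z : h₁ =ᵐ[volume.restrict (Ioc l 1)] 0 := by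
        have := (intervalIntegral.integral_eq_zero_iff_of_le_of_nonneg_ae hl1
          (Filter.Eventually.of_forall fun x => hpos₁ x) i1l).mp hz
        exact this
      have : (∫ x in l..1, (1 - x) * h₁ x) = 0 := by
        rw [intervalIntegral.integral_of_le hl1]
        refine integral_eq_zero_of_ae ?_
        filter_upwards [h1z] with x hx
        simp [hx]
      rw [this, hz, mul_zero]
    · have hp1 : 0 < (∫ x in l..1, h₁ x) :=
        lt_of_le_of_ne (intervalIntegral.integral_nonneg hl1 fun u _ => hpos₁ u)
          (Ne.symm hz)
      -- h₂ integral must also be positive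
      have hp2 : 0 < (∫ x in l..1, h₂ x) := by
        rcases lt_or_eq_of_le (intervalIntegral.integral_nonneg hl1
          fun u _ => hpos₂ u) with h | h
        · exact h
        · exfalso
          have h2z : h₂ =ᵐ[volume.restrict (Ioc l 1)] 0 :=
            (intervalIntegral.integral_eq_zero_iff_of_le_of_nonneg_ae hl1
              (Filter.Eventually.of_forall fun x => hpos₂ x) i2l).mp h.symm
          have hmlr' : ∀ᵐ x ∂(volume.restrict (Ioc l 1)),
              ENNReal.ofReal (h₁ x) = ρ x * ENNReal.ofReal (h₂ x) :=
            ae_restrict_of_ae_restrict_of_subset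
              (show Ioc l 1 ⊆ Icc 0 1 from fun x hx => ⟨hl0.trans hx.1.le, hx.2⟩) hmlr
          have h1z : h₁ =ᵐ[volume.restrict (Ioc l 1)] 0 := by
            filter_upwards [h2z, hmlr'] with x hx2 hx
            have : ENNReal.ofReal (h₁ x) = 0 := by
              rw [hx, Pi.zero_apply] at *
              simp [hx2]
            have := ENNReal.ofReal_eq_zero.mp this
            exact le_antisymm this (hpos₁ x)
          apply hz
          rw [intervalIntegral.integral_of_le hl1]
          exact integral_eq_zero_of_ae h1z
      have hl1' : l < 1 := by
        by_contra hcon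
        push_neg at hcon
        have : l = 1 := le_antisymm hl1 hcon
        rw [this] at hp1
        simp at hp1
      have hratio := part1 l ⟨hl0, hl1'⟩ hp1 hp2
      have hr2 : (∫ x in l..1, (1 - x) * h₂ x) / (∫ x in l..1, h₂ x) ≤ γ :=
        (div_le_iff₀ hp2).mpr (by linarith [hcond])
      have := hratio.trans hr2
      calc (∫ x in l..1, (1 - x) * h₁ x)
          = (∫ x in l..1, (1 - x) * h₁ x) / (∫ x in l..1, h₁ x) *
            (∫ x in l..1, h₁ x) := by field_simp
        _ ≤ γ * (∫ x in l..1, h₁ x) :=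
            mul_le_mul_of_nonneg_right this hp1.le
  refine ⟨hsub, ?_⟩
  refine csInf_le_csInf ?_ hne hsub
  exact ⟨0, fun x hx => hx.1.1⟩
end

section
/- (Lemma 6, derivative identities for the posterior tail probability with unknown variances.) For every s > 0 and y ∈ ℝ, v(y,s) is differentiable in each argument and ∂v/∂s (y,s) = − Cov_{y,s}( 1{θ ≥ c}, r/σ² ) and ∂v/∂y (y,s) = Cov_{y,s}( 1{θ ≥ c}, T(θ − y)/σ² ), where Cov_{y,s}(A,B) = E_{y,s}[AB] − E_{y,s}[A] E_{y,s}[B] denotes the posterior covariance. In particular neither partial derivative has a fixed sign in general, so v(·,s) need not be monotone in y and v(y,·) need not be monotone in s. -/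
open MeasureTheory ProbabilityTheory Filter Set

set_option maxHeartbeats 1000000

lemma meas_p (Tn r y s : ℝ) (hr : 0 ≤ r) :
    Measurable (fun q : ℝ × ℝ => Real.sqrt (Tn / q.2) * stdGauss ((y - q.1) * Real.sqrt (Tn / q.2)) *
      ((r / q.2) ^ r * s ^ (r - 1) * Real.exp (-(r * s / q.2)) / Real.Gamma r)) := by
  apply Measurable.mul
  apply Measurable.mul
  · fun_prop
  · exact continuous_stdGauss.measurable.comp (by fun_prop)
  · apply Measurable.div _ measurable_const
    apply Measurable.mul
    apply Measurable.mul
    · exact (Real.continuous_rpow_const hr).measurable.comp (measurable_const.div measurable_snd)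
    · fun_prop
    · fun_prop

lemma contOn_p_gen {α : Type*} [TopologicalSpace α] (Tn r : ℝ) (hr : 0 ≤ r)
    (Y S U Tt : α → ℝ) (hY : Continuous Y) (hS : Continuous S) (hU : Continuous U)
    (hTt : Continuous Tt) {D : Set α} (hD : ∀ z ∈ D, 0 < S z ∧ 0 < U z) :
    ContinuousOn (fun z =>
      Real.sqrt (Tn / U z) * stdGauss ((Y z - Tt z) * Real.sqrt (Tn / U z)) *
        ((r / U z) ^ r * S z ^ (r - 1) * Real.exp (-(r * S z / U z)) / Real.Gamma r)) D := by
  intro z hz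
  apply ContinuousAt.continuousWithinAt
  have hu : U z ≠ 0 := (hD z hz).2.ne'
  have hs : S z ≠ 0 := (hD z hz).1.ne'
  have c1 : ContinuousAt (fun z => Real.sqrt (Tn / U z)) z :=
    Real.continuous_sqrt.continuousAt.comp
      (ContinuousAt.div continuousAt_const hU.continuousAt hu)
  have c2 : ContinuousAt (fun z => stdGauss ((Y z - Tt z) * Real.sqrt (Tn / U z))) z :=
    continuous_stdGauss.continuousAt.comp
      (ContinuousAt.mul (hY.continuousAt.sub hTt.continuousAt) c1)
  have c3 : ContinuousAt (fun z => (r / U z) ^ r) z :=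
    ContinuousAt.rpow_const (ContinuousAt.div continuousAt_const hU.continuousAt hu) (Or.inr hr)
  have c4 : ContinuousAt (fun z => S z ^ (r - 1)) z :=
    ContinuousAt.rpow_const hS.continuousAt (Or.inl hs)
  have c5 : ContinuousAt (fun z => Real.exp (-(r * S z / U z))) z :=
    Real.continuous_exp.continuousAt.comp
      (ContinuousAt.neg (ContinuousAt.div (continuousAt_const.mul hS.continuousAt)
        hU.continuousAt hu))
  exact (c1.mul c2).mul (((c3.mul c4).mul c5).div_const _)

lemma hasDerivAt_p_s (Tn r y t u s : ℝ) (hu : 0 < u) (hs : 0 < s) :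
    HasDerivAt (fun s' => Real.sqrt (Tn / u) * stdGauss ((y - t) * Real.sqrt (Tn / u)) *
      ((r / u) ^ r * s' ^ (r - 1) * Real.exp (-(r * s' / u)) / Real.Gamma r))
      (Real.sqrt (Tn / u) * stdGauss ((y - t) * Real.sqrt (Tn / u)) *
        ((r / u) ^ r * s ^ (r - 1) * Real.exp (-(r * s / u)) / Real.Gamma r) *
        ((r - 1) / s - r / u)) s := by
  have h1 : HasDerivAt (fun s' : ℝ => s' ^ (r - 1)) ((r - 1) * s ^ (r - 1 - 1)) s :=
    Real.hasDerivAt_rpow_const (Or.inl hs.ne')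
  have h0 : HasDerivAt (fun s' : ℝ => -(r * s' / u)) (-(r / u)) s := by
    simpa using (((hasDerivAt_id s).const_mul r).div_const u).fun_neg
  have h2 : HasDerivAt (fun s' : ℝ => Real.exp (-(r * s' / u)))
      (Real.exp (-(r * s / u)) * (-(r / u))) s := h0.exp
  have h3 := ((h1.mul h2).const_mul ((r / u) ^ r)).div_const (Real.Gamma r)
  have h4 := h3.const_mul (Real.sqrt (Tn / u) * stdGauss ((y - t) * Real.sqrt (Tn / u)))
  convert h4 using 1
  · rfl
  · rfl
  · funext x; simp only [Pi.mul_apply]; ring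
  · have hss : s ^ (r - 1 - 1) = s ^ (r - 1) / s := by
      rw [show r - 1 - 1 = (r - 1) + (-1) by ring, Real.rpow_add hs, Real.rpow_neg_one]
      ring
    rw [hss]
    field_simp
    ring

lemma hasDerivAt_p_y (Tn r t u s y : ℝ) (hu : 0 ≤ u) (hT : 0 ≤ Tn) :
    HasDerivAt (fun y' => Real.sqrt (Tn / u) * stdGauss ((y' - t) * Real.sqrt (Tn / u)) *
      ((r / u) ^ r * s ^ (r - 1) * Real.exp (-(r * s / u)) / Real.Gamma r))
      (Real.sqrt (Tn / u) * stdGauss ((y - t) * Real.sqrt (Tn / u)) *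
        ((r / u) ^ r * s ^ (r - 1) * Real.exp (-(r * s / u)) / Real.Gamma r) *
        (Tn * (t - y) / u)) y := by
  set m := Real.sqrt (Tn / u) with hm
  set D := (r / u) ^ r * s ^ (r - 1) * Real.exp (-(r * s / u)) / Real.Gamma r with hD
  have hg : HasDerivAt (fun y' : ℝ => (y' - t) * m) m y := by
    simpa using ((hasDerivAt_id y).sub_const t).mul_const m
  have hq : HasDerivAt (fun y' : ℝ => -(((y' - t) * m) ^ 2) / 2)
      (-((2 : ℕ) * ((y - t) * m) ^ 1 * m) / 2) y := ((hg.pow 2).neg).div_const 2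
  have he := hq.exp
  have h4 := ((he.const_mul ((Real.sqrt (2 * Real.pi))⁻¹)).const_mul m).mul_const D
  have hmm : m * m = Tn / u := Real.mul_self_sqrt (div_nonneg hT hu)
  have hstd : ∀ x : ℝ, stdGauss x = (Real.sqrt (2 * Real.pi))⁻¹ * Real.exp (-(x ^ 2) / 2) :=
    fun x => rfl
  simp only [hstd]
  convert h4 using 1
  · rfl
  · rfl
  rw [show Tn * (t - y) / u = (t - y) * (Tn / u) by ring, ← hmm]
  push_cast
  ring

lemma quot_cov (I0 I1 I2 I3 c0 : ℝ) (h : I0 ≠ 0) :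
    -(I2 / I0 - I1 / I0 * (I3 / I0))
      = ((c0 * I1 - I2) * I0 - I1 * (c0 * I0 - I3)) / I0 ^ 2 := by
  field_simp
  ring

lemma quot_cov_y (I0 I1 I2 I3 : ℝ) (h : I0 ≠ 0) :
    I2 / I0 - I1 / I0 * (I3 / I0) = (I2 * I0 - I1 * I3) / I0 ^ 2 := by
  field_simp

/-- Lemma 6 (derivative identities for the posterior tail probability with unknown
variances): for every `s > 0` and `y`, the posterior tail probability `v(y,s)` is
differentiable in each argument, with `∂v/∂s = − Cov_{y,s}(1{θ ≥ c}, r/σ²)` and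
`∂v/∂y = Cov_{y,s}(1{θ ≥ c}, T(θ − y)/σ²)`, where covariances are posterior covariances. -/
theorem posterior_tail_probability_partial_derivatives
    (T : ℕ) (hT : 2 ≤ T) (r : ℝ) (hr : r = ((T : ℝ) - 1) / 2)
    (a b : ℝ) (ha : 0 < a) (hab : a ≤ b)
    (G : Measure (ℝ × ℝ)) [IsProbabilityMeasure G]
    (hsupp : ∃ K : Set (ℝ × ℝ), IsCompact K ∧ K ⊆ univ ×ˢ Icc a b ∧ G Kᶜ = 0)
    (p : ℝ → ℝ → ℝ → ℝ → ℝ)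
    (hp : ∀ y s t u, p y s t u =
      Real.sqrt ((T : ℝ) / u) * stdGauss ((y - t) * Real.sqrt ((T : ℝ) / u)) *
        ((r / u) ^ r * s ^ (r - 1) * Real.exp (-(r * s / u)) / Real.Gamma r))
    (E : ℝ → ℝ → ((ℝ × ℝ) → ℝ) → ℝ)
    (hE : ∀ y s h, E y s h =
      (∫ q, h q * p y s q.1 q.2 ∂G) / (∫ q, p y s q.1 q.2 ∂G))
    (hden : ∀ y s, 0 < s → 0 < ∫ q, p y s q.1 q.2 ∂G)
    (c : ℝ) (v : ℝ → ℝ → ℝ)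
    (hv : ∀ y s, v y s = E y s (fun q => if c ≤ q.1 then 1 else 0)) :
    ∀ s : ℝ, 0 < s → ∀ y : ℝ,
      HasDerivAt (fun s' => v y s')
        (-(E y s (fun q => (if c ≤ q.1 then 1 else 0) * (r / q.2)) -
           E y s (fun q => if c ≤ q.1 then 1 else 0) * E y s (fun q => r / q.2))) s ∧
      HasDerivAt (fun y' => v y' s)
        (E y s (fun q => (if c ≤ q.1 then 1 else 0) * ((T : ℝ) * (q.1 - y) / q.2)) -
           E y s (fun q => if c ≤ q.1 then 1 else 0) *
             E y s (fun q => (T : ℝ) * (q.1 - y) / q.2)) y := by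
  intro s hs y
  obtain ⟨K, hKc, hKsub, hKG⟩ := hsupp
  have hTn : (0:ℝ) ≤ (T:ℝ) := Nat.cast_nonneg T
  have hr0 : 0 < r := by
    rw [hr]
    have h2 : (2:ℝ) ≤ (T:ℝ) := by exact_mod_cast hT
    linarith
  have aeK : ∀ᵐ q ∂G, q ∈ K := by
    rw [ae_iff]
    exact hKG
  have hKu : ∀ q ∈ K, a ≤ q.2 := fun q hq => (hKsub hq).2.1
  obtain ⟨M, hM⟩ : ∃ M, ∀ q ∈ K, |q.1| ≤ M := by
    obtain ⟨R, hR⟩ := hKc.isBounded.exists_norm_le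
    exact ⟨R, fun q hq => le_trans (by simpa [Real.norm_eq_abs] using norm_fst_le q) (hR q hq)⟩
  set h₀ : ℝ × ℝ → ℝ := fun q => if c ≤ q.1 then 1 else 0 with hh₀
  have hh₀m : Measurable h₀ :=
    Measurable.ite (measurableSet_le measurable_const measurable_fst)
      measurable_const measurable_const
  have hh₀b : ∀ q, |h₀ q| ≤ 1 := by
    intro q; simp only [hh₀]
    split <;> norm_num
  have measP : ∀ y' s', Measurable (fun q : ℝ × ℝ => p y' s' q.1 q.2) := by
    intro y' s'
    simp only [hp]
    exact meas_p _ r y' s' hr0.le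
  have int_help : ∀ f : ℝ × ℝ → ℝ, AEStronglyMeasurable f G →
      (∃ C, ∀ q ∈ K, |f q| ≤ C) → Integrable f G := by
    rintro f hfm ⟨C, hC⟩
    exact (integrable_const C).mono' hfm (by
      filter_upwards [aeK] with q hq
      simpa [Real.norm_eq_abs] using hC q hq)
  -- bound for p in the s-variable on Icc (s/2) (3*s/2) × K
  have hboundS : ∃ C : ℝ, 0 ≤ C ∧ ∀ x ∈ Icc (s/2) (3*s/2), ∀ q ∈ K, |p y x q.1 q.2| ≤ C := by
    have hcomp : IsCompact ((Icc (s/2) (3*s/2)) ×ˢ K) := isCompact_Icc.prod hKc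
    have hcont : ContinuousOn (fun z : ℝ × ℝ × ℝ => p y z.1 z.2.1 z.2.2)
        ((Icc (s/2) (3*s/2)) ×ˢ K) := by
      simp only [hp]
      have hD : ∀ z ∈ (Icc (s/2) (3*s/2)) ×ˢ K, (0:ℝ) < z.1 ∧ (0:ℝ) < z.2.2 := by
        rintro z ⟨hz1, hz2⟩
        exact ⟨lt_of_lt_of_le (by linarith) hz1.1, lt_of_lt_of_le ha (hKu _ hz2)⟩
      exact contOn_p_gen (α := ℝ × ℝ × ℝ) (D := (Icc (s/2) (3*s/2)) ×ˢ K) (T:ℝ) r hr0.le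
        (fun _ => y) (fun z => z.1) (fun z => z.2.2) (fun z => z.2.1)
        continuous_const continuous_fst continuous_snd.snd continuous_snd.fst hD
    obtain ⟨C, hC⟩ := hcomp.exists_bound_of_continuousOn hcont
    exact ⟨max C 0, le_max_right _ _, fun x hx q hq =>
      le_trans (by simpa [Real.norm_eq_abs] using hC (x, q) ⟨hx, hq⟩) (le_max_left _ _)⟩
  obtain ⟨Cs, hCs0, hCs⟩ := hboundS
  -- bound for p in the y-variable on Icc (y-1) (y+1) × K
  have hboundY : ∃ C : ℝ, 0 ≤ C ∧ ∀ x ∈ Icc (y-1) (y+1), ∀ q ∈ K, |p x s q.1 q.2| ≤ C := by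
    have hcomp : IsCompact ((Icc (y-1) (y+1)) ×ˢ K) := isCompact_Icc.prod hKc
    have hcont : ContinuousOn (fun z : ℝ × ℝ × ℝ => p z.1 s z.2.1 z.2.2)
        ((Icc (y-1) (y+1)) ×ˢ K) := by
      simp only [hp]
      have hD : ∀ z ∈ (Icc (y-1) (y+1)) ×ˢ K, (0:ℝ) < s ∧ (0:ℝ) < z.2.2 := by
        rintro z ⟨hz1, hz2⟩
        exact ⟨hs, lt_of_lt_of_le ha (hKu _ hz2)⟩
      exact contOn_p_gen (α := ℝ × ℝ × ℝ) (D := (Icc (y-1) (y+1)) ×ˢ K) (T:ℝ) r hr0.le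
        (fun z => z.1) (fun _ => s) (fun z => z.2.2) (fun z => z.2.1)
        continuous_fst continuous_const continuous_snd.snd continuous_snd.fst hD
    obtain ⟨C, hC⟩ := hcomp.exists_bound_of_continuousOn hcont
    exact ⟨max C 0, le_max_right _ _, fun x hx q hq =>
      le_trans (by simpa [Real.norm_eq_abs] using hC (x, q) ⟨hx, hq⟩) (le_max_left _ _)⟩
  obtain ⟨Cy, hCy0, hCy⟩ := hboundY
  -- key derivative in s
  have key_s : ∀ g : ℝ × ℝ → ℝ, Measurable g → (∀ q, |g q| ≤ 1) →
      HasDerivAt (fun s' => ∫ q, g q * p y s' q.1 q.2 ∂G)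
        (∫ q, g q * (p y s q.1 q.2 * ((r - 1) / s - r / q.2)) ∂G) s := by
    intro g hg hgb
    refine (hasDerivAt_integral_of_dominated_loc_of_deriv_le (s := Metric.ball s (s/2)) (x₀ := s)
      (F := fun s' q => g q * p y s' q.1 q.2)
      (F' := fun s' q => g q * (p y s' q.1 q.2 * ((r - 1) / s' - r / q.2)))
      (bound := fun _ => Cs * (|r - 1| / (s / 2) + r / a))
      (Metric.ball_mem_nhds _ (by linarith)) ?_ ?_ ?_ ?_ ?_ ?_).2
    · exact Eventually.of_forall fun x => (hg.mul (measP y x)).aestronglyMeasurable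
    · refine int_help _ (hg.mul (measP y s)).aestronglyMeasurable ⟨Cs, fun q hq => ?_⟩
      have hPb := hCs s ⟨by linarith, by linarith⟩ q hq
      calc |g q * p y s q.1 q.2| = |g q| * |p y s q.1 q.2| := abs_mul _ _
        _ ≤ 1 * Cs := mul_le_mul (hgb q) hPb (abs_nonneg _) zero_le_one
        _ = Cs := one_mul _
    · exact (hg.mul ((measP y s).mul
        (measurable_const.sub (measurable_const.div measurable_snd)))).aestronglyMeasurable
    · filter_upwards [aeK] with q hq
      intro x hx
      have hd : |x - s| < s/2 := by
        rw [← Real.dist_eq]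
        exact Metric.mem_ball.1 hx
      have hd' := abs_lt.1 hd
      have hxI : x ∈ Icc (s/2) (3*s/2) := ⟨by linarith [hd'.1], by linarith [hd'.2]⟩
      have hqa : a ≤ q.2 := hKu q hq
      have hP := hCs x hxI q hq
      have hw : |(r - 1)/x - r/q.2| ≤ |r - 1|/(s/2) + r/a := by
        have h1 : |(r - 1)/x| ≤ |r - 1|/(s/2) := by
          rw [abs_div, abs_of_pos (show (0:ℝ) < x by linarith [hd'.1])]
          exact div_le_div_of_nonneg_left (abs_nonneg _) (by linarith) hxI.1
        have h2 : |r/q.2| ≤ r/a := by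
          rw [abs_div, abs_of_pos hr0, abs_of_pos (lt_of_lt_of_le ha hqa)]
          gcongr
        exact le_trans (abs_sub _ _) (add_le_add h1 h2)
      calc ‖g q * (p y x q.1 q.2 * ((r - 1)/x - r/q.2))‖
          = |g q| * (|p y x q.1 q.2| * |(r - 1)/x - r/q.2|) := by
            rw [Real.norm_eq_abs, abs_mul, abs_mul]
        _ ≤ 1 * (Cs * (|r - 1|/(s/2) + r/a)) := by
            refine mul_le_mul (hgb q) (mul_le_mul hP hw (abs_nonneg _) hCs0) (by positivity)
              zero_le_one
        _ = Cs * (|r - 1|/(s/2) + r/a) := one_mul _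
    · exact integrable_const _
    · filter_upwards [aeK] with q hq
      intro x hx
      have hd : |x - s| < s/2 := by
        rw [← Real.dist_eq]
        exact Metric.mem_ball.1 hx
      have hd' := abs_lt.1 hd
      have hx0 : 0 < x := by linarith [hd'.1]
      have hu0 : 0 < q.2 := lt_of_lt_of_le ha (hKu q hq)
      simp only [hp]
      exact (hasDerivAt_p_s (T:ℝ) r y q.1 q.2 x hu0 hx0).const_mul (g q)
  -- key derivative in y
  have key_y : ∀ g : ℝ × ℝ → ℝ, Measurable g → (∀ q, |g q| ≤ 1) →
      HasDerivAt (fun y' => ∫ q, g q * p y' s q.1 q.2 ∂G)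
        (∫ q, g q * (p y s q.1 q.2 * ((T:ℝ) * (q.1 - y) / q.2)) ∂G) y := by
    intro g hg hgb
    refine (hasDerivAt_integral_of_dominated_loc_of_deriv_le (s := Metric.ball y 1) (x₀ := y)
      (F := fun y' q => g q * p y' s q.1 q.2)
      (F' := fun y' q => g q * (p y' s q.1 q.2 * ((T:ℝ) * (q.1 - y') / q.2)))
      (bound := fun _ => Cy * ((T:ℝ) * (M + (|y| + 1)) / a))
      (Metric.ball_mem_nhds _ one_pos) ?_ ?_ ?_ ?_ ?_ ?_).2
    · exact Eventually.of_forall fun x => (hg.mul (measP x s)).aestronglyMeasurable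
    · refine int_help _ (hg.mul (measP y s)).aestronglyMeasurable ⟨Cy, fun q hq => ?_⟩
      have hPb := hCy y ⟨by linarith, by linarith⟩ q hq
      calc |g q * p y s q.1 q.2| = |g q| * |p y s q.1 q.2| := abs_mul _ _
        _ ≤ 1 * Cy := mul_le_mul (hgb q) hPb (abs_nonneg _) zero_le_one
        _ = Cy := one_mul _
    · refine Measurable.aestronglyMeasurable ?_
      exact hg.mul ((measP y s).mul ((measurable_const.mul
        (measurable_fst.sub measurable_const)).div measurable_snd))
    · filter_upwards [aeK] with q hq
      intro x hx
      have hd : |x - y| < 1 := by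
        rw [← Real.dist_eq]
        exact Metric.mem_ball.1 hx
      have hd' := abs_lt.1 hd
      have hxI : x ∈ Icc (y-1) (y+1) := ⟨by linarith [hd'.1], by linarith [hd'.2]⟩
      have hqa : a ≤ q.2 := hKu q hq
      have hu0 : 0 < q.2 := lt_of_lt_of_le ha hqa
      have hP := hCy x hxI q hq
      have hw : |(T:ℝ) * (q.1 - x) / q.2| ≤ (T:ℝ) * (M + (|y| + 1)) / a := by
        rw [abs_div, abs_mul, abs_of_nonneg hTn, abs_of_pos hu0]
        have hq1 : |q.1 - x| ≤ M + (|y| + 1) := by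
          have h1 : |q.1 - x| ≤ |q.1| + |x| := abs_sub _ _
          have h2 : |x| ≤ |y| + 1 := by
            calc |x| = |(x - y) + y| := by ring_nf
              _ ≤ |x - y| + |y| := abs_add_le _ _
              _ ≤ |y| + 1 := by linarith
          linarith [hM q hq]
        have hnn : (0:ℝ) ≤ M + (|y| + 1) := le_trans (abs_nonneg _) hq1
        exact div_le_div₀ (mul_nonneg hTn hnn) (mul_le_mul_of_nonneg_left hq1 hTn) ha hqa
      calc ‖g q * (p x s q.1 q.2 * ((T:ℝ) * (q.1 - x) / q.2))‖
          = |g q| * (|p x s q.1 q.2| * |(T:ℝ) * (q.1 - x) / q.2|) := by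
            rw [Real.norm_eq_abs, abs_mul, abs_mul]
        _ ≤ 1 * (Cy * ((T:ℝ) * (M + (|y| + 1)) / a)) := by
            refine mul_le_mul (hgb q) (mul_le_mul hP hw (abs_nonneg _) hCy0) (by positivity)
              zero_le_one
        _ = Cy * ((T:ℝ) * (M + (|y| + 1)) / a) := one_mul _
    · exact integrable_const _
    · filter_upwards [aeK] with q hq
      intro x hx
      have hu0 : 0 < q.2 := lt_of_lt_of_le ha (hKu q hq)
      simp only [hp]
      exact (hasDerivAt_p_y (T:ℝ) r q.1 q.2 s x hu0.le hTn).const_mul (g q)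
  have hI0 : (0:ℝ) < ∫ q, p y s q.1 q.2 ∂G := hden y s hs
  have hDs := key_s (fun _ => 1) measurable_const (by intro q; norm_num)
  simp only [one_mul] at hDs
  have hNs := key_s h₀ hh₀m hh₀b
  have hNy := key_y h₀ hh₀m hh₀b
  have hDy := key_y (fun _ => 1) measurable_const (by intro q; norm_num)
  simp only [one_mul] at hDy
  -- splitting lemma for the s-derivative integrand
  have split : ∀ g : ℝ × ℝ → ℝ, Measurable g → (∀ q, |g q| ≤ 1) →
      ∫ q, g q * (p y s q.1 q.2 * ((r - 1)/s - r/q.2)) ∂G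
        = (r - 1)/s * ∫ q, g q * p y s q.1 q.2 ∂G
          - ∫ q, (g q * (r/q.2)) * p y s q.1 q.2 ∂G := by
    intro g hg hgb
    have i1 : Integrable (fun q => g q * p y s q.1 q.2) G := by
      refine int_help _ (hg.mul (measP y s)).aestronglyMeasurable ⟨Cs, fun q hq => ?_⟩
      have hPb := hCs s ⟨by linarith, by linarith⟩ q hq
      calc |g q * p y s q.1 q.2| = |g q| * |p y s q.1 q.2| := abs_mul _ _
        _ ≤ 1 * Cs := mul_le_mul (hgb q) hPb (abs_nonneg _) zero_le_one
        _ = Cs := one_mul _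
    have i2 : Integrable (fun q => (g q * (r/q.2)) * p y s q.1 q.2) G := by
      refine int_help _ ((hg.mul (measurable_const.div measurable_snd)).mul
        (measP y s)).aestronglyMeasurable ⟨(r/a) * Cs, fun q hq => ?_⟩
      have hPb := hCs s ⟨by linarith, by linarith⟩ q hq
      have hqa : a ≤ q.2 := hKu q hq
      have h2 : |r/q.2| ≤ r/a := by
        rw [abs_div, abs_of_pos hr0, abs_of_pos (lt_of_lt_of_le ha hqa)]
        gcongr
      calc |(g q * (r/q.2)) * p y s q.1 q.2|
          = |g q| * |r/q.2| * |p y s q.1 q.2| := by rw [abs_mul, abs_mul]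
        _ ≤ 1 * (r/a) * Cs := by
            refine mul_le_mul (mul_le_mul (hgb q) h2 (abs_nonneg _) zero_le_one) hPb
              (abs_nonneg _) (by positivity)
        _ = (r/a) * Cs := by ring
    rw [show (fun q : ℝ × ℝ => g q * (p y s q.1 q.2 * ((r - 1)/s - r/q.2)))
        = fun q => (r - 1)/s * (g q * p y s q.1 q.2) - (g q * (r/q.2)) * p y s q.1 q.2 from
      funext fun q => by ring]
    rw [integral_sub (i1.const_mul _) i2, integral_const_mul]
  have splitN := split h₀ hh₀m hh₀b
  have splitD := split (fun _ => 1) measurable_const (by intro q; norm_num)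
  simp only [one_mul] at splitD
  constructor
  · have hveq : (fun s' => v y s')
        = fun s' => (∫ q, h₀ q * p y s' q.1 q.2 ∂G) / (∫ q, p y s' q.1 q.2 ∂G) := by
      funext s'
      rw [hv, hE]
    rw [hveq]
    convert hNs.div hDs hI0.ne' using 1
    · rfl
    · rfl
    · rfl
    rw [hE, hE, hE, splitN, splitD]
    exact quot_cov _ _ _ _ _ hI0.ne'
  · have hveq : (fun y' => v y' s)
        = fun y' => (∫ q, h₀ q * p y' s q.1 q.2 ∂G) / (∫ q, p y' s q.1 q.2 ∂G) := by
      funext y'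
      rw [hv, hE]
    rw [hveq]
    convert hNy.div hDy hI0.ne' using 1
    · rfl
    · rfl
    · rfl
    rw [hE, hE, hE]
    rw [show (fun q : ℝ × ℝ => h₀ q * (p y s q.1 q.2 * ((T:ℝ) * (q.1 - y) / q.2)))
        = fun q => (h₀ q * ((T:ℝ) * (q.1 - y) / q.2)) * p y s q.1 q.2 from
      funext fun q => by ring]
    rw [show (fun q : ℝ × ℝ => p y s q.1 q.2 * ((T:ℝ) * (q.1 - y) / q.2))
        = fun q => ((T:ℝ) * (q.1 - y) / q.2) * p y s q.1 q.2 from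
      funext fun q => by ring]
    exact quot_cov_y _ _ _ _ hI0.ne'
end

section
/- (Proposition 4, optimal selection rule in the general (unknown variance) case.) Define λ₁* = inf{λ ∈ [0,1] : E[(1 − V − γ) 1{V ≥ λ}] ≤ 0} and λ₂* = inf{λ ∈ [0,1] : ℙ(V ≥ λ) ≤ α}, and set λ* = max(λ₁*, λ₂*). Then the rule selecting on {V ≥ λ*} satisfies ℙ(V ≥ λ*) ≤ α and ℙ(Aᶜ ∩ {V ≥ λ*}) ≤ γ ℙ(V ≥ λ*), and it maximizes the probability of true discoveries among threshold rules: for every λ ∈ [0,1] with ℙ(V ≥ λ) ≤ α and ℙ(Aᶜ ∩ {V ≥ λ}) ≤ γ ℙ(V ≥ λ), one has ℙ(A ∩ {V ≥ λ}) ≤ ℙ(A ∩ {V ≥ λ*}). -/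
open MeasureTheory ProbabilityTheory Filter Set

/-- Proposition 4 (optimal selection rule in the general case): if `V` is a version of the
posterior probability of the event `A` given the observed data σ-algebra `𝒢`, then the
thresholding rule `{V ≥ λ*}` with `λ* = max(λ₁*, λ₂*)` satisfies the capacity constraint at
level `α` and the marginal FDR constraint at level `γ`, and maximizes the probability of
true discoveries among threshold rules satisfying both constraints. -/
theorem optimal_selection_general_case
    {Ω : Type*} (𝒢 : MeasurableSpace Ω) {m0 : MeasurableSpace Ω} (P : Measure Ω) [IsProbabilityMeasure P]
    (h𝒢 : 𝒢 ≤ m0)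
    (A : Set Ω) (hA : MeasurableSet A)
    (α γ : ℝ) (hα : α ∈ Ioo (0:ℝ) 1) (hγ : γ ∈ Ioo (0:ℝ) 1) (hγα : γ < 1 - α)
    (hPA : (P A).toReal = α)
    (V : Ω → ℝ) (hVmeas : Measurable[𝒢] V) (hV01 : ∀ ω, V ω ∈ Icc (0:ℝ) 1)
    (hVcond : P[A.indicator (fun _ => (1:ℝ)) | 𝒢] =ᵐ[P] V)
    (hatomless : ∀ x : ℝ, P {ω | V ω = x} = 0)
    (l1 l2 lstar : ℝ)
    (hl1 : l1 = sInf {l : ℝ | l ∈ Icc (0:ℝ) 1 ∧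
      ∫ ω in {ω' | l ≤ V ω'}, (1 - V ω - γ) ∂P ≤ 0})
    (hl2 : l2 = sInf {l : ℝ | l ∈ Icc (0:ℝ) 1 ∧ (P {ω | l ≤ V ω}).toReal ≤ α})
    (hls : lstar = max l1 l2) :
    (P {ω | lstar ≤ V ω}).toReal ≤ α ∧
    (P (Aᶜ ∩ {ω | lstar ≤ V ω})).toReal ≤ γ * (P {ω | lstar ≤ V ω}).toReal ∧
    ∀ l ∈ Icc (0:ℝ) 1,
      (P {ω | l ≤ V ω}).toReal ≤ α →
      (P (Aᶜ ∩ {ω | l ≤ V ω})).toReal ≤ γ * (P {ω | l ≤ V ω}).toReal →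
      (P (A ∩ {ω | l ≤ V ω})).toReal ≤ (P (A ∩ {ω | lstar ≤ V ω})).toReal := by
  letI : MeasurableSpace Ω := m0
  obtain ⟨hα0, hα1⟩ := hα
  obtain ⟨hγ0, hγ1⟩ := hγ
  have hVm : Measurable[m0] V := hVmeas.mono h𝒢 le_rfl
  have hSG : ∀ l : ℝ, MeasurableSet[𝒢] {ω | l ≤ V ω} := fun l =>
    hVmeas measurableSet_Ici
  have hSm : ∀ l : ℝ, MeasurableSet[m0] {ω | l ≤ V ω} := fun l => h𝒢 _ (hSG l)
  have hAm : MeasurableSet[m0] A := hA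
  have hDm : ∀ a b : ℝ, MeasurableSet[m0] {ω | a ≤ V ω ∧ V ω < b} := fun a b =>
    hVm measurableSet_Ico
  have hVint : Integrable V P := by
    refine ⟨hVm.aestronglyMeasurable, ?_⟩
    refine HasFiniteIntegral.of_bounded (C := 1) (ae_of_all _ fun ω => ?_)
    have h := hV01 ω
    rw [Real.norm_eq_abs, abs_le]
    exact ⟨by linarith [h.1], h.2⟩
  have hint : Integrable (fun ω => 1 - V ω - γ) P :=
    ((integrable_const (1:ℝ)).sub hVint).sub (integrable_const γ)
  -- key identity: P(A ∩ {l ≤ V}) = ∫_{l ≤ V} V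
  have key : ∀ l : ℝ, (P (A ∩ {ω | l ≤ V ω})).toReal
      = ∫ ω in {ω' | l ≤ V ω'}, V ω ∂P := by
    intro l
    have hind : Integrable (A.indicator (fun _ => (1:ℝ))) P :=
      (integrable_const (1:ℝ)).indicator hAm
    have h1 : ∫ ω in {ω' | l ≤ V ω'}, V ω ∂P
        = ∫ ω in {ω' | l ≤ V ω'}, (P[A.indicator (fun _ => (1:ℝ)) | 𝒢]) ω ∂P :=
      setIntegral_congr_ae (hSm l) (hVcond.mono fun ω h _ => h.symm)
    rw [h1, setIntegral_condExp h𝒢 hind (hSG l), setIntegral_indicator hAm,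
      setIntegral_const, smul_eq_mul, mul_one, inter_comm, measureReal_def]
  -- splitting of probabilities
  have fsplit : ∀ l : ℝ, (P {ω | l ≤ V ω}).toReal
      = (P (A ∩ {ω | l ≤ V ω})).toReal + (P (Aᶜ ∩ {ω | l ≤ V ω})).toReal := by
    intro l
    rw [← ENNReal.toReal_add (measure_ne_top _ _) (measure_ne_top _ _)]
    congr 1
    have h := measure_inter_add_diff (μ := P) {ω | l ≤ V ω} hAm
    rw [Set.diff_eq] at h
    rw [inter_comm A, inter_comm Aᶜ, ← h]
  -- formula for g
  have gEq : ∀ l : ℝ, ∫ ω in {ω' | l ≤ V ω'}, (1 - V ω - γ) ∂P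
      = (P (Aᶜ ∩ {ω | l ≤ V ω})).toReal - γ * (P {ω | l ≤ V ω}).toReal := by
    intro l
    have h1 : ∫ ω in {ω' | l ≤ V ω'}, (1 - V ω - γ) ∂P
        = ∫ ω in {ω' | l ≤ V ω'}, ((1 - γ) - V ω) ∂P :=
      integral_congr_ae (ae_of_all _ fun ω => by ring)
    rw [h1, integral_sub (integrable_const _) hVint.integrableOn,
      setIntegral_const, smul_eq_mul, measureReal_def, ← key l, fsplit l]
    ring
  -- splitting the set integral
  have hsplit : ∀ a b : ℝ, a ≤ b → ∀ h : Ω → ℝ, Integrable h P →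
      ∫ ω in {ω' | a ≤ V ω'}, h ω ∂P
        = ∫ ω in {ω' | b ≤ V ω'}, h ω ∂P
          + ∫ ω in {ω' | a ≤ V ω' ∧ V ω' < b}, h ω ∂P := by
    intro a b hab h hh
    have hset : {ω | a ≤ V ω} = {ω | b ≤ V ω} ∪ {ω | a ≤ V ω ∧ V ω < b} := by
      ext ω
      simp only [mem_setOf_eq, mem_union]
      constructor
      · intro hω
        rcases le_or_gt b (V ω) with h' | h'
        · exact Or.inl h'
        · exact Or.inr ⟨hω, h'⟩
      · rintro (h' | ⟨h', _⟩)
        · exact le_trans hab h'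
        · exact h'
    rw [hset]
    exact setIntegral_union (by
      rw [Set.disjoint_left]
      rintro ω hω ⟨_, hω2⟩
      exact absurd hω (not_le.2 hω2)) (hDm a b) hh.integrableOn hh.integrableOn
  -- upward closedness of g ≤ 0
  have gmono : ∀ a b : ℝ, a ≤ b →
      (∫ ω in {ω' | a ≤ V ω'}, (1 - V ω - γ) ∂P ≤ 0) →
      ∫ ω in {ω' | b ≤ V ω'}, (1 - V ω - γ) ∂P ≤ 0 := by
    intro a b hab ha
    rcases le_or_gt (1 - γ) b with hb | hb
    · apply integral_nonpos_of_ae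
      refine (ae_restrict_iff' (hSm b)).2 (ae_of_all _ fun ω hω => ?_)
      have hbV : b ≤ V ω := hω
      simp only [Pi.zero_apply]
      linarith
    · have hsab := hsplit a b hab (fun ω => 1 - V ω - γ) hint
      have hpos : 0 ≤ ∫ ω in {ω' | a ≤ V ω' ∧ V ω' < b}, (1 - V ω - γ) ∂P := by
        apply setIntegral_nonneg (hDm a b)
        intro ω hω
        have hVb : V ω < b := hω.2
        linarith
      linarith
  -- the vanishing strips
  have hDlim : ∀ c : ℝ, Tendsto
      (fun n : ℕ => (P {ω | c ≤ V ω ∧ V ω < c + 1 / (n + 1)}).toReal) atTop (nhds 0) := by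
    intro c
    have hanti : Antitone (fun n : ℕ => {ω | c ≤ V ω ∧ V ω < c + 1 / (n + 1)}) := by
      intro n m hnm ω hω
      refine ⟨hω.1, lt_of_lt_of_le hω.2 ?_⟩
      have h1 : (1 : ℝ) / (m + 1) ≤ 1 / (n + 1) := by
        apply one_div_le_one_div_of_le (by positivity)
        exact_mod_cast Nat.succ_le_succ hnm
      linarith
    have hInter : (⋂ n : ℕ, {ω | c ≤ V ω ∧ V ω < c + 1 / (n + 1)}) = {ω | V ω = c} := by
      ext ω
      simp only [mem_iInter, mem_setOf_eq]
      constructor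
      · intro h
        refine le_antisymm ?_ (h 0).1
        by_contra hc
        push_neg at hc
        obtain ⟨n, hn⟩ := exists_nat_one_div_lt (sub_pos.2 hc)
        have := (h n).2
        linarith
      · intro h
        refine fun n => ⟨le_of_eq h.symm, ?_⟩
        rw [h]
        have : (0:ℝ) < 1 / ((n:ℝ) + 1) := by positivity
        linarith
    have h0 : Tendsto (fun n : ℕ => P {ω | c ≤ V ω ∧ V ω < c + 1 / (n + 1)}) atTop (nhds 0) := by
      have h := tendsto_measure_iInter_atTop (μ := P)
        (s := fun n : ℕ => {ω | c ≤ V ω ∧ V ω < c + 1 / (n + 1)})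
        (fun n => (hDm _ _).nullMeasurableSet) hanti ⟨0, measure_ne_top _ _⟩
      rw [hInter, hatomless c] at h
      exact h
    have := (ENNReal.tendsto_toReal (a := 0) (by simp)).comp h0
    exact this
  subst hl1 hl2 hls
  set Sg := {l : ℝ | l ∈ Icc (0:ℝ) 1 ∧
      ∫ ω in {ω' | l ≤ V ω'}, (1 - V ω - γ) ∂P ≤ 0} with hSgdef
  set Sf := {l : ℝ | l ∈ Icc (0:ℝ) 1 ∧ (P {ω | l ≤ V ω}).toReal ≤ α} with hSfdef
  have hP1 : P {ω | (1:ℝ) ≤ V ω} = 0 := by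
    refine measure_mono_null (fun ω hω => ?_) (hatomless 1)
    exact le_antisymm (hV01 ω).2 hω
  have hg1 : (1:ℝ) ∈ Sg := by
    refine ⟨⟨zero_le_one, le_rfl⟩, ?_⟩
    rw [gEq]
    have h1 : P (Aᶜ ∩ {ω | (1:ℝ) ≤ V ω}) = 0 :=
      measure_mono_null Set.inter_subset_right hP1
    rw [h1, hP1]
    simp
  have hf1 : (1:ℝ) ∈ Sf := by
    refine ⟨⟨zero_le_one, le_rfl⟩, ?_⟩
    rw [hP1]
    simpa using hα0.le
  have hgbdd : BddBelow Sg := ⟨0, fun x hx => hx.1.1⟩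
  have hfbdd : BddBelow Sf := ⟨0, fun x hx => hx.1.1⟩
  -- capacity at l2
  have hfl2 : (P {ω | sInf Sf ≤ V ω}).toReal ≤ α := by
    have hmain : ∀ n : ℕ, (P {ω | sInf Sf ≤ V ω}).toReal
        ≤ α + (P {ω | sInf Sf ≤ V ω ∧ V ω < sInf Sf + 1 / (n + 1)}).toReal := by
      intro n
      have hlt : sInf Sf < sInf Sf + 1 / (n + 1) := by
        have : (0:ℝ) < 1 / ((n:ℝ) + 1) := by positivity
        linarith
      obtain ⟨x, hx, hxlt⟩ := exists_lt_of_csInf_lt ⟨1, hf1⟩ hlt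
      have hx2 : (P {ω | sInf Sf + 1 / (n + 1) ≤ V ω}).toReal ≤ α := by
        refine le_trans ?_ hx.2
        exact ENNReal.toReal_mono (measure_ne_top _ _)
          (measure_mono fun ω hω => le_trans hxlt.le hω)
      have hsub : {ω | sInf Sf ≤ V ω} ⊆ {ω | sInf Sf + 1 / (n + 1) ≤ V ω}
          ∪ {ω | sInf Sf ≤ V ω ∧ V ω < sInf Sf + 1 / (n + 1)} := by
        intro ω hω
        rcases le_or_gt (sInf Sf + 1 / (n + 1)) (V ω) with h' | h'
        · exact Or.inl h'
        · exact Or.inr ⟨hω, h'⟩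
      have hmle := (measure_mono (μ := P) hsub).trans (measure_union_le _ _)
      have htor : (P {ω | sInf Sf ≤ V ω}).toReal
          ≤ (P {ω | sInf Sf + 1 / (n + 1) ≤ V ω}).toReal
            + (P {ω | sInf Sf ≤ V ω ∧ V ω < sInf Sf + 1 / (n + 1)}).toReal := by
        rw [← ENNReal.toReal_add (measure_ne_top _ _) (measure_ne_top _ _)]
        exact ENNReal.toReal_mono
          (ENNReal.add_ne_top.2 ⟨measure_ne_top _ _, measure_ne_top _ _⟩) hmle
      linarith
    have hlim : Tendsto (fun n : ℕ =>
        α + (P {ω | sInf Sf ≤ V ω ∧ V ω < sInf Sf + 1 / (n + 1)}).toReal) atTop (nhds α) := by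
      simpa using (tendsto_const_nhds (x := α) (f := atTop (α := ℕ))).add (hDlim (sInf Sf))
    exact ge_of_tendsto hlim (Eventually.of_forall hmain)
  -- FDR at l1
  have hgl1 : ∫ ω in {ω' | sInf Sg ≤ V ω'}, (1 - V ω - γ) ∂P ≤ 0 := by
    have hmain : ∀ n : ℕ, ∫ ω in {ω' | sInf Sg ≤ V ω'}, (1 - V ω - γ) ∂P
        ≤ (P {ω | sInf Sg ≤ V ω ∧ V ω < sInf Sg + 1 / (n + 1)}).toReal := by
      intro n
      have hlt : sInf Sg < sInf Sg + 1 / (n + 1) := by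
        have : (0:ℝ) < 1 / ((n:ℝ) + 1) := by positivity
        linarith
      obtain ⟨x, hx, hxlt⟩ := exists_lt_of_csInf_lt ⟨1, hg1⟩ hlt
      have hx2 : ∫ ω in {ω' | sInf Sg + 1 / (n + 1) ≤ V ω'}, (1 - V ω - γ) ∂P ≤ 0 :=
        gmono x _ hxlt.le hx.2
      have hD : ∫ ω in {ω' | sInf Sg ≤ V ω' ∧ V ω' < sInf Sg + 1 / (n + 1)}, (1 - V ω - γ) ∂P
          ≤ (P {ω | sInf Sg ≤ V ω ∧ V ω < sInf Sg + 1 / (n + 1)}).toReal := by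
        have h1 : ∫ ω in {ω' | sInf Sg ≤ V ω' ∧ V ω' < sInf Sg + 1 / (n + 1)},
              (1 - V ω - γ) ∂P
            ≤ ∫ _ω in {ω' | sInf Sg ≤ V ω' ∧ V ω' < sInf Sg + 1 / (n + 1)}, (1:ℝ) ∂P := by
          apply setIntegral_mono_on hint.integrableOn (integrable_const _) (hDm _ _)
          intro ω _
          have h := hV01 ω
          have := h.1
          linarith
        rw [setIntegral_const, smul_eq_mul, mul_one] at h1
        exact h1
      have hsab := hsplit (sInf Sg) (sInf Sg + 1 / (n + 1)) hlt.le (fun ω => 1 - V ω - γ) hint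
      linarith
    exact ge_of_tendsto (hDlim (sInf Sg)) (Eventually.of_forall hmain)
  -- assemble
  have hstar1 : (P {ω | max (sInf Sg) (sInf Sf) ≤ V ω}).toReal ≤ α := by
    refine le_trans ?_ hfl2
    exact ENNReal.toReal_mono (measure_ne_top _ _)
      (measure_mono fun ω hω => le_trans (le_max_right (sInf Sg) (sInf Sf)) hω)
  have hstar2 : ∫ ω in {ω' | max (sInf Sg) (sInf Sf) ≤ V ω'}, (1 - V ω - γ) ∂P ≤ 0 :=
    gmono (sInf Sg) _ (le_max_left _ _) hgl1
  rw [gEq] at hstar2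
  refine ⟨hstar1, by linarith, ?_⟩
  intro l hl hcap hfdr
  rcases le_or_gt (max (sInf Sg) (sInf Sf)) l with h | h
  · exact ENNReal.toReal_mono (measure_ne_top _ _)
      (measure_mono (Set.inter_subset_inter_right _ fun ω hω => le_trans h hω))
  · exfalso
    have hl2le : sInf Sf ≤ l := csInf_le hfbdd ⟨hl, hcap⟩
    have hl1le : sInf Sg ≤ l := by
      refine csInf_le hgbdd ⟨hl, ?_⟩
      rw [gEq]
      linarith
    exact absurd h (not_lt.2 (max_le hl1le hl2le))
end

section
/- (Shape and zero-crossing of the FDR constraint function, from the proof of Proposition 2.) Let V be a random variable with values in [0,1], atomless law, and E[V] = α, and let γ ∈ (0,1) with γ < 1 − α. Define f₁(λ) = E[(1 − V − γ) 1{V ≥ λ}] for λ ∈ [0,1]. Then: f₁ is continuous on [0,1]; f₁(0) = 1 − α − γ > 0 and f₁(1) = 0; f₁ is nonincreasing on [0, 1−γ] and nondecreasing on [1−γ, 1]; f₁(1−γ) ≤ 0; and consequently there exists λ* ∈ (0, 1−γ] with f₁(λ*) = 0, and f₁(λ) ≤ 0 for every λ ∈ [λ*, 1]. -/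
open MeasureTheory ProbabilityTheory Filter Set Topology

/-- Shape and zero-crossing of the FDR constraint function (from the proof of
Proposition 2): `f₁(λ) = E[(1 − V − γ) 1{V ≥ λ}]` is continuous on `[0,1]`, equals
`1 − α − γ > 0` at `0` and `0` at `1`, is nonincreasing on `[0, 1−γ]` and nondecreasing on
`[1−γ, 1]`, is nonpositive at `1 − γ`, and has a zero `λ* ∈ (0, 1−γ]` with `f₁ ≤ 0` on
`[λ*, 1]`. -/
theorem fdr_constraint_function_shape
    {Ω : Type*} [MeasureSpace Ω] [IsProbabilityMeasure (ℙ : Measure Ω)]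
    (V : Ω → ℝ) (hmeas : Measurable V) (h01 : ∀ᵐ ω ∂ℙ, V ω ∈ Icc (0:ℝ) 1)
    (hatomless : ∀ x : ℝ, ℙ {ω | V ω = x} = 0)
    (α γ : ℝ) (hEV : ∫ ω, V ω ∂ℙ = α)
    (hγ : γ ∈ Ioo (0:ℝ) 1) (hγα : γ < 1 - α)
    (f₁ : ℝ → ℝ)
    (hf₁ : ∀ l, f₁ l = ∫ ω in {ω' | l ≤ V ω'}, (1 - V ω - γ) ∂ℙ) :
    ContinuousOn f₁ (Icc (0:ℝ) 1) ∧
    f₁ 0 = 1 - α - γ ∧ 0 < 1 - α - γ ∧ f₁ 1 = 0 ∧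
    AntitoneOn f₁ (Icc (0:ℝ) (1 - γ)) ∧ MonotoneOn f₁ (Icc (1 - γ) 1) ∧
    f₁ (1 - γ) ≤ 0 ∧
    ∃ lstar ∈ Ioc (0:ℝ) (1 - γ), f₁ lstar = 0 ∧ ∀ l ∈ Icc lstar 1, f₁ l ≤ 0 := by
  obtain ⟨hγ0, hγ1⟩ := hγ
  set g : Ω → ℝ := fun ω => 1 - V ω - γ with hgdef
  have hVint : Integrable V ℙ := by
    refine (integrable_const (1:ℝ)).mono' hmeas.aestronglyMeasurable ?_
    filter_upwards [h01] with ω hω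
    rw [Real.norm_eq_abs]
    exact abs_le.2 ⟨by linarith [hω.1], hω.2⟩
  have hgint : Integrable g ℙ := ((integrable_const (1:ℝ)).sub hVint).sub (integrable_const γ)
  have hms : ∀ l : ℝ, MeasurableSet {ω | l ≤ V ω} := fun l =>
    measurableSet_le measurable_const hmeas
  have hsub : ∀ a b : ℝ, a ≤ b → {ω | b ≤ V ω} ⊆ {ω | a ≤ V ω} := by
    intro a b hab ω hω
    exact le_trans hab hω
  have hdiff : ∀ a b : ℝ, a ≤ b →
      f₁ a - f₁ b = ∫ ω in {ω | a ≤ V ω} \ {ω | b ≤ V ω}, g ω ∂ℙ := by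
    intro a b hab
    rw [hf₁, hf₁, ← integral_diff (hms b) hgint.integrableOn (hsub a b hab)]
  -- nonpositivity for l ≥ 1 - γ
  have hnonpos : ∀ l : ℝ, 1 - γ ≤ l → f₁ l ≤ 0 := by
    intro l hl
    rw [hf₁]
    refine setIntegral_nonpos (hms l) ?_
    intro ω hω
    have : l ≤ V ω := hω
    show (1:ℝ) - V ω - γ ≤ 0
    linarith
  -- continuity
  have hcont : Continuous f₁ := by
    rw [continuous_iff_continuousAt]
    intro l
    have hrw : ∀ t : ℝ, f₁ t = ∫ ω, Set.indicator {ω' | t ≤ V ω'} g ω ∂ℙ := by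
      intro t
      rw [hf₁, ← integral_indicator (hms t)]
    unfold ContinuousAt
    rw [hrw l]
    have : Tendsto (fun t => ∫ ω, Set.indicator {ω' | t ≤ V ω'} g ω ∂ℙ) (𝓝 l)
        (𝓝 (∫ ω, Set.indicator {ω' | l ≤ V ω'} g ω ∂ℙ)) := by
      refine tendsto_integral_filter_of_dominated_convergence (fun _ => (1:ℝ)) ?_ ?_
        (integrable_const 1) ?_
      · filter_upwards with t
        exact (hgint.aestronglyMeasurable).indicator (hms t)
      · filter_upwards with t
        filter_upwards [h01] with ω hω
        refine le_trans (norm_indicator_le_norm_self g ω) ?_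
        rw [Real.norm_eq_abs]
        have : g ω = 1 - V ω - γ := rfl
        rw [this]
        exact abs_le.2 ⟨by linarith [hω.2], by linarith [hω.1]⟩
      · have hne : ∀ᵐ ω ∂ℙ, V ω ≠ l := by
          rw [ae_iff]
          simpa using hatomless l
        filter_upwards [hne] with ω hω
        rcases lt_or_gt_of_ne hω with h | h
        · -- V ω < l : indicator eventually 0 and equals 0 at l
          have h0 : Set.indicator {ω' | l ≤ V ω'} g ω = 0 :=
            Set.indicator_of_notMem (by simpa using not_le.2 h) g
          rw [h0]
          refine Tendsto.congr' ?_ (tendsto_const_nhds (α := ℝ) (x := 0))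
          filter_upwards [eventually_gt_nhds h] with t ht
          exact (Set.indicator_of_notMem (by simpa using not_le.2 ht) g).symm
        · -- l < V ω : indicator eventually g ω
          have h0 : Set.indicator {ω' | l ≤ V ω'} g ω = g ω :=
            Set.indicator_of_mem (show ω ∈ {ω' | l ≤ V ω'} from le_of_lt h) g
          rw [h0]
          refine Tendsto.congr' ?_ (tendsto_const_nhds (α := ℝ) (x := g ω))
          filter_upwards [eventually_lt_nhds h] with t ht
          exact (Set.indicator_of_mem (show ω ∈ {ω' | t ≤ V ω'} from le_of_lt ht) g).symm
    refine this.congr' ?_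
    filter_upwards with t
    exact (hrw t).symm
  -- f₁ 0
  have hf0 : f₁ 0 = 1 - α - γ := by
    have hnull : ℙ {ω | 0 ≤ V ω}ᶜ = 0 := by
      refine measure_mono_null ?_ (ae_iff.1 h01)
      intro ω hω
      simp only [mem_compl_iff, mem_setOf_eq, not_le] at hω ⊢
      intro hc
      exact absurd hc.1 (not_le.2 hω)
    rw [hf₁]
    have : ∫ ω in {ω | 0 ≤ V ω}, g ω ∂ℙ = ∫ ω, g ω ∂ℙ := by
      rw [setIntegral_congr_set (ae_eq_univ.2 hnull), setIntegral_univ]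
    rw [this, hgdef]
    have h1 : (fun ω => 1 - V ω - γ) = fun ω => ((1:ℝ) - γ) - V ω := by funext ω; ring
    rw [h1, integral_sub (integrable_const _) hVint, integral_const, hEV]
    simp [measure_univ]
    ring
  -- f₁ 1
  have hf1 : f₁ 1 = 0 := by
    have hnull : ℙ {ω | 1 ≤ V ω} = 0 := by
      have hsub1 : {ω | 1 ≤ V ω} ⊆ {ω | V ω = 1} ∪ {ω | ¬ V ω ∈ Icc (0:ℝ) 1} := by
        intro ω hω
        rcases eq_or_lt_of_le (show (1:ℝ) ≤ V ω from hω) with h | h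
        · exact Or.inl h.symm
        · exact Or.inr (fun hc => absurd hc.2 (not_le.2 h))
      exact measure_mono_null hsub1 (measure_union_null (hatomless 1) (ae_iff.1 h01))
    rw [hf₁]
    exact setIntegral_measure_zero _ hnull
  have hpos : 0 < 1 - α - γ := by linarith
  -- antitone
  have hanti : AntitoneOn f₁ (Icc (0:ℝ) (1 - γ)) := by
    intro a ha b hb hab
    have := hdiff a b hab
    have hge : 0 ≤ ∫ ω in {ω | a ≤ V ω} \ {ω | b ≤ V ω}, g ω ∂ℙ := by
      refine setIntegral_nonneg ((hms a).diff (hms b)) ?_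
      intro ω hω
      have h2 : V ω < b := not_le.1 hω.2
      show (0:ℝ) ≤ 1 - V ω - γ
      have := hb.2
      linarith
    linarith
  -- monotone
  have hmono : MonotoneOn f₁ (Icc (1 - γ) 1) := by
    intro a ha b hb hab
    have := hdiff a b hab
    have hle : (∫ ω in {ω | a ≤ V ω} \ {ω | b ≤ V ω}, g ω ∂ℙ) ≤ 0 := by
      refine setIntegral_nonpos ((hms a).diff (hms b)) ?_
      intro ω hω
      have h1 : a ≤ V ω := hω.1
      show (1:ℝ) - V ω - γ ≤ 0
      have := ha.1
      linarith
    linarith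
  have hγle : (0:ℝ) ≤ 1 - γ := by linarith
  have hnp : f₁ (1 - γ) ≤ 0 := hnonpos _ le_rfl
  -- IVT
  obtain ⟨lstar, hls, hfls⟩ : ∃ l ∈ Icc (0:ℝ) (1 - γ), f₁ l = 0 := by
    have := intermediate_value_Icc' hγle (hcont.continuousOn)
    have h0mem : (0:ℝ) ∈ Icc (f₁ (1 - γ)) (f₁ 0) := ⟨hnp, by rw [hf0]; linarith⟩
    obtain ⟨l, hl, hleq⟩ := this h0mem
    exact ⟨l, hl, hleq⟩
  have hlpos : 0 < lstar := by
    rcases eq_or_lt_of_le hls.1 with h | h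
    · exfalso; rw [← h] at hfls; rw [← hfls] at hpos; rw [hf0] at hfls; linarith
    · exact h
  refine ⟨hcont.continuousOn, hf0, hpos, hf1, hanti, hmono, hnp,
    lstar, ⟨hlpos, hls.2⟩, hfls, ?_⟩
  intro l hl
  rcases le_or_gt l (1 - γ) with h | h
  · have : f₁ l ≤ f₁ lstar :=
      hanti ⟨le_of_lt hlpos, hls.2⟩ ⟨le_trans (le_of_lt hlpos) hl.1, h⟩ hl.1
    linarith [hfls ▸ this]
  · exact hnonpos l (le_of_lt h)
end
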